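/- arXiv:2410.14359 — 10 statements merged into one kernel-verified Lean document; each statement's English description precedes it below -/
import Mathlib

section
/- Suppose P and Q are completely κ-closed posets, D is a κ-closed dense subset of Q, and π : D → P is a κ-continuous projection. Then for each κ-closed dense subset E of P, the preimage π⁻¹[E] is a κ-closed dense subset of Q. -/
open Cardinal

/-- A poset is *completely `κ`-closed* when every descending sequence of length `< κ`
(indexed by a nonempty well-order of cardinality `< κ`) has a greatest lower bound. -/
def CompletelyClosed (κ : Cardinal) (P : Type) [Preorder P] : Prop :=
  ∀ (ι : Type) [LinearOrder ι] [WellFoundedLT ι] [Nonempty ι],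
    #ι < κ → ∀ f : ι → P, Antitone f → ∃ p, IsGLB (Set.range f) p

/-- A subset `X` is *κ-closed* when it contains the infima of all descending sequences
of length `< κ` from `X`. -/
def KClosedSet (κ : Cardinal) {P : Type} [Preorder P] (X : Set P) : Prop :=
  ∀ (ι : Type) [LinearOrder ι] [WellFoundedLT ι] [Nonempty ι],
    #ι < κ → ∀ f : ι → P, Antitone f → (∀ i, f i ∈ X) →
      ∀ p, IsGLB (Set.range f) p → p ∈ X

/-- A subset is *dense* when every element of the poset has a lower bound in it. -/
def DenseSub {P : Type} [Preorder P] (X : Set P) : Prop :=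
  ∀ p, ∃ q ∈ X, q ≤ p

/-- `π`, viewed as a map defined on `D ⊆ Q`, is a *projection* to `P`:
it is order-preserving on `D`, its image is dense in `P`, and every strengthening of
a projected condition can be traced back into `D`. -/
def ProjectionOn {Q P : Type} [Preorder Q] [Preorder P] (D : Set Q) (π : Q → P) : Prop :=
  (∀ q ∈ D, ∀ q' ∈ D, q ≤ q' → π q ≤ π q') ∧
  (∀ p : P, ∃ q ∈ D, π q ≤ p) ∧
  ∀ q ∈ D, ∀ p, p ≤ π q → ∃ q' ∈ D, q' ≤ q ∧ π q' ≤ p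

/-- `π`, viewed as a map defined on `D ⊆ Q`, is *κ-continuous*: it sends infima of
descending sequences of length `< κ` from `D` to infima of the image sequences. -/
def KContinuousOn (κ : Cardinal) {Q P : Type} [Preorder Q] [Preorder P]
    (D : Set Q) (π : Q → P) : Prop :=
  ∀ (ι : Type) [LinearOrder ι] [WellFoundedLT ι] [Nonempty ι],
    #ι < κ → ∀ f : ι → Q, Antitone f → (∀ i, f i ∈ D) →
      ∀ q, IsGLB (Set.range f) q → q ∈ D →
        IsGLB (Set.range (π ∘ f)) (π q)

/-- If `D` is a κ-closed dense subset of `Q` and `π : D → P` is a κ-continuous projection,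
then for each κ-closed dense `E ⊆ P`, the preimage `π⁻¹[E]` is a κ-closed dense subset of `Q`. -/
theorem stmt3 (κ : Cardinal) (hreg : κ.IsRegular) (hunc : ℵ₀ < κ)
    (P Q : Type) [PartialOrder P] [PartialOrder Q]
    (hP : CompletelyClosed κ P) (hQ : CompletelyClosed κ Q)
    (D : Set Q) (hDc : KClosedSet κ D) (hDd : DenseSub D)
    (π : Q → P) (hproj : ProjectionOn D π) (hcont : KContinuousOn κ D π)
    (E : Set P) (hEc : KClosedSet κ E) (hEd : DenseSub E) :
    KClosedSet κ {q ∈ D | π q ∈ E} ∧ DenseSub {q ∈ D | π q ∈ E} := by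
  classical
  constructor
  · intro ι _ _ _ hι f hf hmem p hglb
    have hfD : ∀ i, f i ∈ D := fun i => (hmem i).1
    have hpD : p ∈ D := hDc ι hι f hf hfD p hglb
    have hπglb := hcont ι hι f hf hfD p hglb hpD
    have hπanti : Antitone (π ∘ f) := fun i j hij =>
      hproj.1 _ (hfD j) _ (hfD i) (hf hij)
    exact ⟨hpD, hEc ι hι (π ∘ f) hπanti (fun i => (hmem i).2) _ hπglb⟩
  · intro q
    obtain ⟨q₀, hq₀D, hq₀⟩ := hDd q
    have hstep : ∀ r ∈ D, ∃ r', r' ∈ D ∧ r' ≤ r ∧ ∃ p ∈ E, π r' ≤ p ∧ p ≤ π r := by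
      intro r hr
      obtain ⟨p, hpE, hp⟩ := hEd (π r)
      obtain ⟨r', hr'D, hr'le, hπ⟩ := hproj.2.2 r hr p hp
      exact ⟨r', hr'D, hr'le, p, hpE, hπ, hp⟩
    set g : Q → Q := fun r => if h : r ∈ D then (hstep r h).choose else r with hg_def
    have hg : ∀ r (h : r ∈ D), g r ∈ D ∧ g r ≤ r ∧ ∃ p ∈ E, π (g r) ≤ p ∧ p ≤ π r := by
      intro r h
      simpa [hg_def, dif_pos h] using (hstep r h).choose_spec
    set f : ℕ → Q := fun n => g^[n] q₀ with hf_def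
    have hf0 : f 0 = q₀ := rfl
    have hfsucc : ∀ n, f (n + 1) = g (f n) := by
      intro n; simp [hf_def, Function.iterate_succ_apply']
    have hfD : ∀ n, f n ∈ D := by
      intro n
      induction n with
      | zero => exact hq₀D
      | succ n ih => rw [hfsucc]; exact (hg (f n) ih).1
    have hfanti : Antitone f :=
      antitone_nat_of_succ_le fun n => by rw [hfsucc]; exact (hg (f n) (hfD n)).2.1
    have hℕκ : #ℕ < κ := by rw [Cardinal.mk_nat]; exact hunc
    obtain ⟨w, hw⟩ := hQ ℕ hℕκ f hfanti
    have hwD : w ∈ D := hDc ℕ hℕκ f hfanti hfD w hw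
    have hπglb : IsGLB (Set.range (π ∘ f)) (π w) := hcont ℕ hℕκ f hfanti hfD w hw hwD
    have hπmono : ∀ m n, m ≤ n → π (f n) ≤ π (f m) := fun m n hmn =>
      hproj.1 _ (hfD n) _ (hfD m) (hfanti hmn)
    -- the interleaved sequence in E
    set ps : ℕ → P := fun n => (hg (f n) (hfD n)).2.2.choose with hps_def
    have hps : ∀ n, ps n ∈ E ∧ π (f (n + 1)) ≤ ps n ∧ ps n ≤ π (f n) := by
      intro n
      obtain ⟨h1, h2, h3⟩ := (hg (f n) (hfD n)).2.2.choose_spec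
      exact ⟨h1, by rw [hfsucc]; exact h2, h3⟩
    have hpsanti : Antitone ps := by
      intro m n hmn
      rcases eq_or_lt_of_le hmn with rfl | h
      · exact le_refl _
      · exact le_trans (le_trans (hps n).2.2 (hπmono (m + 1) n h)) (hps m).2.1
    have hlb : lowerBounds (Set.range ps) = lowerBounds (Set.range (π ∘ f)) := by
      ext x
      constructor
      · intro hx y hy
        obtain ⟨n, rfl⟩ := hy
        exact le_trans (hx ⟨n, rfl⟩) (hps n).2.2
      · intro hx y hy
        obtain ⟨n, rfl⟩ := hy
        exact le_trans (hx ⟨n + 1, rfl⟩) (hps n).2.1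
    have hpsglb : IsGLB (Set.range ps) (π w) := by
      unfold IsGLB IsGreatest
      rw [hlb]; exact hπglb
    have hπwE : π w ∈ E := hEc ℕ hℕκ ps hpsanti (fun n => (hps n).1) (π w) hpsglb
    refine ⟨w, ⟨hwD, hπwE⟩, ?_⟩
    exact le_trans (hw.1 ⟨0, rfl⟩) hq₀
end

section
/- Suppose P₀, P₁, P₂ are completely κ-closed posets, and for i<2, D_i ⊆ P_i is a κ-closed dense subset and π_i : D_i → P_{i+1} is a κ-continuous projection. Then there is a κ-closed dense set E ⊆ P₀ on which the composition π₁ ∘ π₀ is defined and is a κ-continuous projection to P₂. -/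
open Cardinal

/-- Given completely κ-closed posets `P₀, P₁, P₂`, κ-closed dense sets `D₀ ⊆ P₀`, `D₁ ⊆ P₁`,
and κ-continuous projections `π₀ : D₀ → P₁`, `π₁ : D₁ → P₂`, there is a κ-closed dense
`E ⊆ P₀` on which `π₁ ∘ π₀` is defined and is a κ-continuous projection to `P₂`. -/
theorem stmt4 (κ : Cardinal) (hreg : κ.IsRegular) (hunc : ℵ₀ < κ)
    (P₀ P₁ P₂ : Type) [PartialOrder P₀] [PartialOrder P₁] [PartialOrder P₂]
    (h₀ : CompletelyClosed κ P₀) (h₁ : CompletelyClosed κ P₁) (h₂ : CompletelyClosed κ P₂)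
    (D₀ : Set P₀) (hD₀c : KClosedSet κ D₀) (hD₀d : DenseSub D₀)
    (D₁ : Set P₁) (hD₁c : KClosedSet κ D₁) (hD₁d : DenseSub D₁)
    (π₀ : P₀ → P₁) (hπ₀ : ProjectionOn D₀ π₀) (hπ₀c : KContinuousOn κ D₀ π₀)
    (π₁ : P₁ → P₂) (hπ₁ : ProjectionOn D₁ π₁) (hπ₁c : KContinuousOn κ D₁ π₁) :
    ∃ E : Set P₀, E ⊆ D₀ ∧ KClosedSet κ E ∧ DenseSub E ∧
      (∀ p ∈ E, π₀ p ∈ D₁) ∧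
      ProjectionOn E (π₁ ∘ π₀) ∧ KContinuousOn κ E (π₁ ∘ π₀) := by
  obtain ⟨hm0, hd0, ht0⟩ := hπ₀
  obtain ⟨hm1, hd1, ht1⟩ := hπ₁
  have hℕ : (#ℕ) < κ := by simpa using hunc
  set E : Set P₀ := {p | p ∈ D₀ ∧ π₀ p ∈ D₁} with hE
  have hEsub : E ⊆ D₀ := fun p hp => hp.1
  have hEclosed : KClosedSet κ E := by
    intro ι _ _ _ hι f hf hfE p hglb
    have hfD : ∀ i, f i ∈ D₀ := fun i => (hfE i).1
    have hpD : p ∈ D₀ := hD₀c ι hι f hf hfD p hglb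
    have hglb1 : IsGLB (Set.range (π₀ ∘ f)) (π₀ p) := hπ₀c ι hι f hf hfD p hglb hpD
    have hanti : Antitone (π₀ ∘ f) := fun i j hij => hm0 _ (hfD j) _ (hfD i) (hf hij)
    exact ⟨hpD, hD₁c ι hι (π₀ ∘ f) hanti (fun i => (hfE i).2) (π₀ p) hglb1⟩
  have hEdense : DenseSub E := by
    intro p
    obtain ⟨q0, hq0, hq0p⟩ := hD₀d p
    obtain ⟨r0, hr0, hr0q⟩ := hD₁d (π₀ q0)
    have step : ∀ x : {x : P₀ × P₁ // x.1 ∈ D₀ ∧ x.2 ∈ D₁ ∧ x.2 ≤ π₀ x.1},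
        ∃ y : {x : P₀ × P₁ // x.1 ∈ D₀ ∧ x.2 ∈ D₁ ∧ x.2 ≤ π₀ x.1},
          y.1.1 ≤ x.1.1 ∧ π₀ y.1.1 ≤ x.1.2 := by
      rintro ⟨⟨q, r⟩, hq, hr, hrq⟩
      obtain ⟨q', hq', hq'q, hq'r⟩ := ht0 q hq r hrq
      obtain ⟨r', hr', hr'le⟩ := hD₁d (π₀ q')
      exact ⟨⟨⟨q', r'⟩, hq', hr', hr'le⟩, hq'q, hq'r⟩
    choose stepf hs1 hs2 using step
    let g : ℕ → {x : P₀ × P₁ // x.1 ∈ D₀ ∧ x.2 ∈ D₁ ∧ x.2 ≤ π₀ x.1} :=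
      fun n => Nat.rec ⟨⟨q0, r0⟩, hq0, hr0, hr0q⟩ (fun _ x => stepf x) n
    set qs : ℕ → P₀ := fun n => (g n).1.1 with hqs
    set rs : ℕ → P₁ := fun n => (g n).1.2 with hrs
    have hqD : ∀ n, qs n ∈ D₀ := fun n => (g n).2.1
    have hrD : ∀ n, rs n ∈ D₁ := fun n => (g n).2.2.1
    have hrq : ∀ n, rs n ≤ π₀ (qs n) := fun n => (g n).2.2.2
    have hstep1 : ∀ n, qs (n + 1) ≤ qs n := fun n => hs1 (g n)
    have hstep2 : ∀ n, π₀ (qs (n + 1)) ≤ rs n := fun n => hs2 (g n)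
    have hanti : Antitone qs := antitone_nat_of_succ_le hstep1
    obtain ⟨q, hq⟩ := h₀ ℕ hℕ qs hanti
    have hqD₀ : q ∈ D₀ := hD₀c ℕ hℕ qs hanti hqD q hq
    have hglb1 : IsGLB (Set.range (π₀ ∘ qs)) (π₀ q) := hπ₀c ℕ hℕ qs hanti hqD q hq hqD₀
    have hlb : ∀ n, π₀ q ≤ rs n := fun n =>
      le_trans (hglb1.1 ⟨n + 1, rfl⟩) (hstep2 n)
    have hrglb : IsGLB (Set.range rs) (π₀ q) := by
      constructor
      · rintro _ ⟨n, rfl⟩; exact hlb n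
      · intro b hb
        apply hglb1.2
        rintro _ ⟨n, rfl⟩
        exact le_trans (hb ⟨n, rfl⟩) (hrq n)
    have hrsanti : Antitone rs :=
      antitone_nat_of_succ_le fun n => le_trans (hrq (n + 1)) (hstep2 n)
    have hqE : π₀ q ∈ D₁ := hD₁c ℕ hℕ rs hrsanti hrD (π₀ q) hrglb
    exact ⟨q, ⟨hqD₀, hqE⟩, le_trans (hq.1 ⟨0, rfl⟩) hq0p⟩
  have hEmem : ∀ p ∈ E, π₀ p ∈ D₁ := fun p hp => hp.2
  refine ⟨E, hEsub, hEclosed, hEdense, hEmem, ⟨?_, ?_, ?_⟩, ?_⟩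
  · -- monotone
    intro q hq q' hq' hle
    exact hm1 _ hq.2 _ hq'.2 (hm0 _ hq.1 _ hq'.1 hle)
  · -- dense image
    intro p
    obtain ⟨r, hr, hrp⟩ := hd1 p
    obtain ⟨t, ht, htr⟩ := hd0 r
    obtain ⟨e, he, het⟩ := hEdense t
    refine ⟨e, he, ?_⟩
    have h1 : π₀ e ≤ r := le_trans (hm0 _ he.1 _ ht het) htr
    exact le_trans (hm1 _ he.2 _ hr h1) hrp
  · -- tracing
    intro q hq p hp
    obtain ⟨r, hr, hrq, hrp⟩ := ht1 (π₀ q) hq.2 p hp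
    obtain ⟨q₁, hq₁, hq₁q, hq₁r⟩ := ht0 q hq.1 r hrq
    obtain ⟨e, he, heq₁⟩ := hEdense q₁
    refine ⟨e, he, le_trans heq₁ hq₁q, ?_⟩
    have h1 : π₀ e ≤ r := le_trans (hm0 _ he.1 _ hq₁ heq₁) hq₁r
    exact le_trans (hm1 _ he.2 _ hr h1) hrp
  · -- continuity
    intro ι _ _ _ hι f hf hfE q hglb hqE
    have hfD : ∀ i, f i ∈ D₀ := fun i => (hfE i).1
    have hglb1 : IsGLB (Set.range (π₀ ∘ f)) (π₀ q) := hπ₀c ι hι f hf hfD q hglb hqE.1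
    have hanti : Antitone (π₀ ∘ f) := fun i j hij => hm0 _ (hfD j) _ (hfD i) (hf hij)
    exact hπ₁c ι hι (π₀ ∘ f) hanti (fun i => (hfE i).2) (π₀ q) hglb1 hqE.2
end

section
/- Let κ be a regular uncountable cardinal and ⟨P⃗, π⃗⟩ a κ-good inverse system of length ω. Then the inverse limit of the system is completely κ-closed, and for each i<ω, the coordinate map p⃗ ↦ p⃗(i) is a κ-continuous projection from the inverse limit to P_i. -/
open Cardinal

/-- A (total) *projection*. -/
def IsProjection {Q P : Type} [Preorder Q] [Preorder P] (π : Q → P) : Prop :=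
  Monotone π ∧ (∀ p, ∃ q, π q ≤ p) ∧ ∀ q p, p ≤ π q → ∃ q', q' ≤ q ∧ π q' ≤ p

/-- A (total) map is *κ-continuous* when it preserves infima of descending sequences of
length `< κ`. -/
def KContinuous (κ : Cardinal) {Q P : Type} [Preorder Q] [Preorder P] (π : Q → P) : Prop :=
  ∀ (ι : Type) [LinearOrder ι] [WellFoundedLT ι] [Nonempty ι],
    #ι < κ → ∀ f : ι → Q, Antitone f → ∀ q, IsGLB (Set.range f) q →
      IsGLB (Set.range (π ∘ f)) (π q)

/-- The inverse limit of an inverse system of posets with partially defined projections: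
threads `p` with `p n ∈ dom π_{nm}` and `π_{nm}(p n) = p m` for all `m < n`,
ordered pointwise. -/
abbrev InvLimitOmega (P : ℕ → Type) [∀ n, PartialOrder (P n)]
    (Dom : ∀ m n, m < n → Set (P n)) (π : ∀ m n, m < n → P n → P m) : Type :=
  {p : ∀ n, P n // ∀ m n (h : m < n), p n ∈ Dom m n h ∧ π m n h (p n) = p m}

open Cardinal Set

private lemma glb_of_lb_eq {Q : Type} [Preorder Q] {s t : Set Q} {a : Q}
    (h : lowerBounds s = lowerBounds t) (hs : IsGLB s a) : IsGLB t a := by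
  unfold IsGLB at *; rw [h] at hs; exact hs

private lemma nat_glb {κ : Cardinal} {Q : Type} [Preorder Q] (hκ : ℵ₀ < κ)
    (hQ : CompletelyClosed κ Q) (x : ℕ → Q) (hx : Antitone x) :
    ∃ g, IsGLB (Set.range x) g := by
  exact hQ ℕ (by rw [Cardinal.mk_nat]; exact hκ) x hx

/-- Intersection of countably many dense κ-closed sets is dense. -/
private lemma inter_dense {κ : Cardinal} {Q : Type} [Preorder Q] {ι : Type} [Countable ι]
    (hκ : ℵ₀ < κ) (hQ : CompletelyClosed κ Q) (C : ι → Set Q)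
    (hd : ∀ t, DenseSub (C t)) (hc : ∀ t, KClosedSet κ (C t)) :
    DenseSub (⋂ t, C t) := by
  intro y
  have : Encodable ι := Encodable.ofCountable ι
  -- step function
  have hstep : ∀ (i : ℕ) (x : Q), ∃ z, (∀ t, Encodable.decode₂ ι (Nat.unpair i).1 = some t → z ∈ C t) ∧ z ≤ x := by
    intro i x
    rcases h : Encodable.decode₂ ι (Nat.unpair i).1 with _ | t
    · exact ⟨x, fun t ht => by simp_all, le_refl x⟩
    · obtain ⟨z, hz, hzle⟩ := hd t x
      exact ⟨z, fun t' ht' => by injection ht' with e; exact e ▸ hz, hzle⟩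
  choose F hF1 hF2 using hstep
  set x : ℕ → Q := fun i => Nat.rec y (fun i ih => F i ih) i with hxdef
  have hxsucc : ∀ i, x (i+1) = F i (x i) := fun i => rfl
  have hanti : Antitone x := antitone_nat_of_succ_le (fun i => by rw [hxsucc]; exact hF2 i (x i))
  obtain ⟨g, hg⟩ := nat_glb hκ hQ x hanti
  refine ⟨g, Set.mem_iInter.2 fun t => ?_, le_trans (hg.1 ⟨0, rfl⟩) (le_refl y)⟩
  -- subsequence hitting C t
  set φ : ℕ → ℕ := fun j => Nat.pair (Encodable.encode t) j + 1 with hφ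
  have hφmono : Monotone φ := fun a b hab => by
    rcases Nat.lt_or_ge a b with h | h
    · exact Nat.succ_le_succ (Nat.pair_lt_pair_right _ h).le
    · have : a = b := le_antisymm hab h; simp [this]
  have hmem : ∀ j, x (φ j) ∈ C t := by
    intro j
    rw [hφ]; simp only []
    rw [hxsucc]
    apply hF1
    rw [Nat.unpair_pair]
    exact Encodable.decode₂_encode t
  have hsubanti : Antitone (fun j => x (φ j)) := fun a b hab => hanti (hφmono hab)
  have hglb' : IsGLB (Set.range fun j => x (φ j)) g := by
    apply glb_of_lb_eq (s := Set.range x) _ hg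
    ext b; constructor
    · rintro hb _ ⟨j, rfl⟩; exact hb ⟨φ j, rfl⟩
    · rintro hb _ ⟨i, rfl⟩
      calc b ≤ x (φ i) := hb ⟨i, rfl⟩
        _ ≤ x i := hanti (le_trans (Nat.right_le_pair _ i) (Nat.le_succ _))
  exact hc t ℕ (by rw [Cardinal.mk_nat]; exact hκ) _ hsubanti hmem g hglb'

section SystemAux
set_option linter.unusedSectionVars false

variable {κ : Cardinal} {P : ℕ → Type} [∀ n, PartialOrder (P n)]
  (Dom : ∀ m n : ℕ, m < n → Set (P n)) (π : ∀ m n : ℕ, m < n → P n → P m)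
  (hunc : ℵ₀ < κ)
  (hcc : ∀ n, CompletelyClosed κ (P n))
  (hdense : ∀ m n (h : m < n), DenseSub (Dom m n h))
  (hclosed : ∀ m n (h : m < n), KClosedSet κ (Dom m n h))
  (hproj : ∀ m n (h : m < n), ProjectionOn (Dom m n h) (π m n h))
  (hcont : ∀ m n (h : m < n), KContinuousOn κ (Dom m n h) (π m n h))
  (hcomm : ∀ i j k (hij : i < j) (hjk : j < k) (p : P k),
      p ∈ Dom j k hjk → p ∈ Dom i k (hij.trans hjk) → π j k hjk p ∈ Dom i j hij →
        π i j hij (π j k hjk p) = π i k (hij.trans hjk) p)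

private def DpSet (m j l : ℕ) (hmj : m < j) (hjl : j < l) : Set (P l) :=
  {x | x ∈ Dom j l hjl ∧ π j l hjl x ∈ Dom m j hmj}

include hclosed hcont hproj in
private lemma Dp_closed (m j l : ℕ) (hmj : m < j) (hjl : j < l) :
    KClosedSet κ (DpSet Dom π m j l hmj hjl) := by
  intro ι _ _ _ hι f hf hmem p hp
  have hfD : ∀ i, f i ∈ Dom j l hjl := fun i => (hmem i).1
  have hpD : p ∈ Dom j l hjl := hclosed j l hjl ι hι f hf hfD p hp
  have hπ : IsGLB (Set.range (π j l hjl ∘ f)) (π j l hjl p) :=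
    hcont j l hjl ι hι f hf hfD p hp hpD
  have hπanti : Antitone (π j l hjl ∘ f) := fun a b hab =>
    (hproj j l hjl).1 (f b) (hfD b) (f a) (hfD a) (hf hab)
  exact ⟨hpD, hclosed m j hmj ι hι _ hπanti (fun i => (hmem i).2) _ hπ⟩

include hunc hcc hdense hclosed hproj hcont in
private lemma Dp_dense (m j l : ℕ) (hmj : m < j) (hjl : j < l) :
    DenseSub (DpSet Dom π m j l hmj hjl) := by
  intro y
  obtain ⟨x0, hx0, hx0le⟩ := hdense j l hjl y
  have hstep : ∀ x : {x : P l // x ∈ Dom j l hjl}, ∃ x' : {x : P l // x ∈ Dom j l hjl}, ∃ z,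
      x'.1 ≤ x.1 ∧ z ∈ Dom m j hmj ∧ π j l hjl x'.1 ≤ z ∧ z ≤ π j l hjl x.1 := by
    rintro ⟨x, hx⟩
    obtain ⟨z, hz, hzle⟩ := hdense m j hmj (π j l hjl x)
    obtain ⟨x', hx', hx'le, hπ⟩ := (hproj j l hjl).2.2 x hx z hzle
    exact ⟨⟨x', hx'⟩, z, hx'le, hz, hπ, hzle⟩
  choose F Z h1 h2 h3 h4 using hstep
  set X : ℕ → {x : P l // x ∈ Dom j l hjl} :=
    fun i => Nat.rec ⟨x0, hx0⟩ (fun _ ih => F ih) i with hX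
  have hXsucc : ∀ i, X (i+1) = F (X i) := fun i => rfl
  have hanti : Antitone (fun i => (X i).1) := antitone_nat_of_succ_le (fun i => h1 (X i))
  obtain ⟨g, hg⟩ := nat_glb hunc (hcc l) _ hanti
  have hgD : g ∈ Dom j l hjl :=
    hclosed j l hjl ℕ (by rw [Cardinal.mk_nat]; exact hunc) _ hanti (fun i => (X i).2) g hg
  have hπg : IsGLB (Set.range (π j l hjl ∘ fun i => (X i).1)) (π j l hjl g) :=
    hcont j l hjl ℕ (by rw [Cardinal.mk_nat]; exact hunc) _ hanti (fun i => (X i).2) g hg hgD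
  have hZanti : Antitone (fun i => Z (X i)) :=
    antitone_nat_of_succ_le (fun i => le_trans (h4 (X (i+1))) (h3 (X i)))
  have hglbZ : IsGLB (Set.range fun i => Z (X i)) (π j l hjl g) := by
    apply glb_of_lb_eq (s := Set.range (π j l hjl ∘ fun i => (X i).1)) _ hπg
    ext b; constructor
    · rintro hb _ ⟨i, rfl⟩
      exact le_trans (hb ⟨i+1, rfl⟩) (h3 (X i))
    · rintro hb _ ⟨i, rfl⟩
      exact le_trans (hb ⟨i, rfl⟩) (h4 (X i))
  have hπgD : π j l hjl g ∈ Dom m j hmj :=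
    hclosed m j hmj ℕ (by rw [Cardinal.mk_nat]; exact hunc) _ hZanti (fun i => h2 (X i)) _ hglbZ
  exact ⟨g, ⟨hgD, hπgD⟩, le_trans (hg.1 ⟨0, rfl⟩) hx0le⟩

private def CSet (l : ℕ) (c : {mj : ℕ × ℕ // mj.1 < mj.2 ∧ mj.2 ≤ l}) : Set (P l) :=
  if h : c.1.2 = l then Dom c.1.1 l (lt_of_lt_of_le c.2.1 (le_of_eq h))
  else DpSet Dom π c.1.1 c.1.2 l c.2.1 (lt_of_le_of_ne c.2.2 h)

private def GoodSet (l : ℕ) : Set (P l) := ⋂ c, CSet Dom π l c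

private lemma good_mem_dom {l : ℕ} {x : P l} (hx : x ∈ GoodSet Dom π l)
    (m : ℕ) (h : m < l) : x ∈ Dom m l h := by
  have := Set.mem_iInter.1 hx ⟨(m, l), h, le_refl l⟩
  unfold CSet at this
  rw [dif_pos rfl] at this
  exact this

private lemma good_mem_dp {l : ℕ} {x : P l} (hx : x ∈ GoodSet Dom π l)
    (m j : ℕ) (h1 : m < j) (h2 : j < l) :
    π j l h2 x ∈ Dom m j h1 ∧ x ∈ Dom j l h2 := by
  have := Set.mem_iInter.1 hx ⟨(m, j), h1, le_of_lt h2⟩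
  unfold CSet at this
  rw [dif_neg (Nat.ne_of_lt h2)] at this
  exact ⟨this.2, this.1⟩

include hunc hcc hdense hclosed hproj hcont in
private lemma good_dense (l : ℕ) : DenseSub (GoodSet Dom π l) := by
  apply inter_dense hunc (hcc l)
  · intro c
    unfold CSet
    split
    · exact hdense _ _ _
    · exact Dp_dense Dom π hunc hcc hdense hclosed hproj hcont _ _ _ _ _
  · intro c
    unfold CSet
    split
    · exact hclosed _ _ _
    · exact Dp_closed Dom π hclosed hproj hcont _ _ _ _ _

private def wFun (n : ℕ) (T : ∀ k, P (n+k)) (m L : ℕ) (h : m < n + L) : P m :=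
  π m (n+L) h (T L)

private lemma wFun_congr (n : ℕ) (T : ∀ k, P (n+k)) (m : ℕ) {L L' : ℕ} (e : L = L')
    (h : m < n + L) (h' : m < n + L') : wFun π n T m L h = wFun π n T m L' h' := by
  subst e; rfl

include hunc hcc hdense hclosed hproj hcont hcomm in
private lemma main_construction (n : ℕ) (p : P n) (R : ∀ k : ℕ, Set (P (n+k)))
    (hdown : ∀ k (x y : P (n+k)), y ≤ x → x ∈ R k → y ∈ R k)
    (hp : p ∈ R 0)
    (hstep : ∀ k (x : P (n+k)), x ∈ R k → ∃ r : P (n+(k+1)), r ∈ R (k+1) ∧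
      ∃ _ : r ∈ Dom (n+k) (n+(k+1)) (by omega), π (n+k) (n+(k+1)) (by omega) r ≤ x) :
    ∃ u : InvLimitOmega P Dom π, u.1 n ≤ p ∧
      ∀ m : ℕ, ∃ x : P (n+(m+1)), x ∈ R (m+1) ∧ ∃ _ : x ∈ Dom m (n+(m+1)) (by omega),
        u.1 m ≤ π m (n+(m+1)) (by omega) x := by
  have mkN : (#ℕ) < κ := by rw [Cardinal.mk_nat]; exact hunc
  -- base element
  obtain ⟨t0, ht0G, ht0le⟩ := good_dense Dom π hunc hcc hdense hclosed hproj hcont n p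
  -- step existence on the carrier
  have hstep2 : ∀ k (x : {x : P (n+k) // x ∈ R k ∧ x ∈ GoodSet Dom π (n+k)}),
      ∃ y : {x : P (n+(k+1)) // x ∈ R (k+1) ∧ x ∈ GoodSet Dom π (n+(k+1))},
        π (n+k) (n+(k+1)) (by omega) y.1 ≤ x.1 := by
    rintro k ⟨x, hxR, hxG⟩
    obtain ⟨r, hrR, hrD, hrle⟩ := hstep k x hxR
    obtain ⟨t, htG, htle⟩ := good_dense Dom π hunc hcc hdense hclosed hproj hcont (n+(k+1)) r
    have htD : t ∈ Dom (n+k) (n+(k+1)) (by omega) :=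
      good_mem_dom Dom π htG (n+k) (by omega)
    have hmono : π (n+k) (n+(k+1)) (by omega) t ≤ π (n+k) (n+(k+1)) (by omega) r :=
      (hproj (n+k) (n+(k+1)) (by omega)).1 t htD r hrD htle
    exact ⟨⟨t, hdown (k+1) r t htle hrR, htG⟩, le_trans hmono hrle⟩
  choose G hG using hstep2
  set T : ∀ k, {x : P (n+k) // x ∈ R k ∧ x ∈ GoodSet Dom π (n+k)} :=
    fun k => Nat.rec ⟨t0, hdown 0 p t0 ht0le hp, ht0G⟩ (fun k ih => G k ih) k with hT
  have hTsucc : ∀ k, π (n+k) (n+(k+1)) (by omega) (T (k+1)).1 ≤ (T k).1 := fun k => hG k (T k)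
  set w : ∀ (m L : ℕ), m < n + L → P m := wFun π n (fun k => (T k).1) with hw
  have w_mem : ∀ m k L (hmk : m < k) (hkL : k < n+L), w k L hkL ∈ Dom m k hmk :=
    fun m k L hmk hkL => (good_mem_dp Dom π (T L).2.2 m k hmk hkL).1
  have w_comm : ∀ m k L (hmk : m < k) (hkL : k < n+L),
      π m k hmk (w k L hkL) = w m L (hmk.trans hkL) := by
    intro m k L hmk hkL
    have hGd := (T L).2.2
    exact hcomm m k (n+L) hmk hkL (T L).1 (good_mem_dom Dom π hGd k hkL)
      (good_mem_dom Dom π hGd m (hmk.trans hkL)) ((good_mem_dp Dom π hGd m k hmk hkL).1)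
  have w_succ_le : ∀ m L (h : m < n+L) (h' : m < n+(L+1)), w m (L+1) h' ≤ w m L h := by
    intro m L h h'
    have hkL : n+L < n+(L+1) := by omega
    have hGd := (T (L+1)).2.2
    have e : π m (n+L) h (π (n+L) (n+(L+1)) hkL (T (L+1)).1) = w m (L+1) h' :=
      hcomm m (n+L) (n+(L+1)) h hkL (T (L+1)).1 (good_mem_dom Dom π hGd (n+L) hkL)
        (good_mem_dom Dom π hGd m (h.trans hkL)) ((good_mem_dp Dom π hGd m (n+L) h hkL).1)
    rw [← e]
    exact (hproj m (n+L) h).1 _ ((good_mem_dp Dom π hGd m (n+L) h hkL).1) _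
      (good_mem_dom Dom π (T L).2.2 m h) (hTsucc L)
  have w_anti : ∀ m L L' (hLL' : L ≤ L') (h : m < n+L) (h' : m < n+L'),
      w m L' h' ≤ w m L h := by
    intro m L L' hLL'
    induction L', hLL' using Nat.le_induction with
    | base => intro h h'; exact le_rfl
    | succ L'' hL ih =>
      intro h h'
      exact le_trans (w_succ_le m L'' (by omega) h') (ih h (by omega))
  -- the diagonal sequences and their infima
  have hus : ∀ m, ∃ g, IsGLB (Set.range fun j => w m (m+1+j) (by omega)) g := by
    intro m
    apply nat_glb hunc (hcc m)
    exact antitone_nat_of_succ_le (fun j => w_succ_le m (m+1+j) (by omega) (by omega))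
  choose u hu using hus
  have s_anti : ∀ m, Antitone (fun j => w m (m+1+j) (by omega : m < n+(m+1+j))) :=
    fun m => antitone_nat_of_succ_le (fun j => w_succ_le m (m+1+j) (by omega) (by omega))
  have s_mem : ∀ m k (h : m < k) (j : ℕ),
      w k (k+1+j) (by omega : k < n+(k+1+j)) ∈ Dom m k h :=
    fun m k h j => w_mem m k (k+1+j) h (by omega)
  have thread : ∀ m k (h : m < k), u k ∈ Dom m k h ∧ π m k h (u k) = u m := by
    intro m k h
    have hmemD : u k ∈ Dom m k h :=
      hclosed m k h ℕ mkN _ (s_anti k) (s_mem m k h) (u k) (hu k)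
    refine ⟨hmemD, ?_⟩
    have hπglb : IsGLB (Set.range (π m k h ∘ fun j => w k (k+1+j) (by omega))) (π m k h (u k)) :=
      hcont m k h ℕ mkN _ (s_anti k) (s_mem m k h) (u k) (hu k) hmemD
    have key : ∀ j, π m k h (w k (k+1+j) (by omega)) = w m (k+1+j) (by omega) :=
      fun j => w_comm m k (k+1+j) h (by omega)
    have hlbeq : lowerBounds (Set.range (π m k h ∘ fun j => w k (k+1+j) (by omega)))
        = lowerBounds (Set.range fun j => w m (m+1+j) (by omega)) := by
      ext b; constructor
      · rintro hb _ ⟨j, rfl⟩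
        have h1 : b ≤ π m k h (w k (k+1+j) (by omega)) := hb ⟨j, rfl⟩
        rw [key j] at h1
        exact le_trans h1 (w_anti m (m+1+j) (k+1+j) (by omega) (by omega) (by omega))
      · rintro hb _ ⟨j, rfl⟩
        show b ≤ π m k h (w k (k+1+j) (by omega))
        rw [key j]
        have h2 : b ≤ w m (m+1+(k-m+j)) (by omega) := hb ⟨k-m+j, rfl⟩
        rw [hw] at h2 ⊢
        rwa [wFun_congr π n _ m (show m+1+(k-m+j) = k+1+j by omega) (by omega) (by omega)] at h2
    exact (glb_of_lb_eq hlbeq hπglb).unique (hu m)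
  refine ⟨⟨u, thread⟩, ?_, ?_⟩
  · have h1 : u n ≤ w n (n+1+0) (by omega) := (hu n).1 ⟨0, rfl⟩
    have h2 : w n (n+1+0) (by omega) ≤ w n 1 (by omega) := w_anti n 1 (n+1+0) (by omega) (by omega) (by omega)
    have h3 : w n 1 (by omega) ≤ (T 0).1 := hTsucc 0
    exact le_trans h1 (le_trans h2 (le_trans h3 ht0le))
  · intro m
    refine ⟨(T (m+1)).1, (T (m+1)).2.1, good_mem_dom Dom π (T (m+1)).2.2 m (by omega), ?_⟩
    exact (hu m).1 ⟨0, rfl⟩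

include hcc hclosed hcont in
private lemma glb_pointwise {ι : Type} [LinearOrder ι] [WellFoundedLT ι] [Nonempty ι]
    (hι : #ι < κ) (f : ι → InvLimitOmega P Dom π) (hf : Antitone f) :
    ∃ u : InvLimitOmega P Dom π, IsGLB (Set.range f) u ∧
      ∀ n, IsGLB (Set.range fun i => (f i).1 n) (u.1 n) := by
  have hcoord : ∀ n, Antitone (fun i => (f i).1 n) := fun n a b hab =>
    Subtype.coe_le_coe.2 (hf hab) n
  have hex : ∀ n, ∃ g, IsGLB (Set.range fun i => (f i).1 n) g :=
    fun n => hcc n ι hι _ (hcoord n)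
  choose u hu using hex
  have thread : ∀ m k (h : m < k), u k ∈ Dom m k h ∧ π m k h (u k) = u m := by
    intro m k h
    have hmem : ∀ i, (f i).1 k ∈ Dom m k h := fun i => ((f i).2 m k h).1
    have hD : u k ∈ Dom m k h := hclosed m k h ι hι _ (hcoord k) hmem (u k) (hu k)
    refine ⟨hD, ?_⟩
    have hπ : IsGLB (Set.range (π m k h ∘ fun i => (f i).1 k)) (π m k h (u k)) :=
      hcont m k h ι hι _ (hcoord k) hmem (u k) (hu k) hD
    have heq : (π m k h ∘ fun i => (f i).1 k) = fun i => (f i).1 m :=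
      funext fun i => ((f i).2 m k h).2
    rw [heq] at hπ
    exact hπ.unique (hu m)
  refine ⟨⟨u, thread⟩, ⟨?_, ?_⟩, hu⟩
  · rintro _ ⟨i, rfl⟩
    exact Subtype.coe_le_coe.1 (fun n => (hu n).1 ⟨i, rfl⟩)
  · intro r hr
    exact Subtype.coe_le_coe.1 (fun n => (hu n).2 (fun _ ⟨i, hi⟩ => hi ▸ Subtype.coe_le_coe.2 (hr ⟨i, rfl⟩) n))

end SystemAux
/-- For a κ-good inverse system of length ω, the inverse limit is completely κ-closed and
each coordinate map is a κ-continuous projection. -/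
theorem stmt6 (κ : Cardinal) (hreg : κ.IsRegular) (hunc : ℵ₀ < κ)
    (P : ℕ → Type) [∀ n, PartialOrder (P n)]
    (hcc : ∀ n, CompletelyClosed κ (P n))
    (Dom : ∀ m n, m < n → Set (P n))
    (π : ∀ m n, m < n → P n → P m)
    (hdense : ∀ m n (h : m < n), DenseSub (Dom m n h))
    (hclosed : ∀ m n (h : m < n), KClosedSet κ (Dom m n h))
    (hproj : ∀ m n (h : m < n), ProjectionOn (Dom m n h) (π m n h))
    (hcont : ∀ m n (h : m < n), KContinuousOn κ (Dom m n h) (π m n h))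
    (hcomm : ∀ i j k (hij : i < j) (hjk : j < k) (p : P k),
      p ∈ Dom j k hjk → p ∈ Dom i k (hij.trans hjk) → π j k hjk p ∈ Dom i j hij →
        π i j hij (π j k hjk p) = π i k (hij.trans hjk) p) :
    CompletelyClosed κ (InvLimitOmega P Dom π) ∧
      ∀ n, IsProjection (fun p : InvLimitOmega P Dom π => p.1 n) ∧
        KContinuous κ (fun p : InvLimitOmega P Dom π => p.1 n) := by
  constructor
  · intro ι _ _ _ hι f hf
    obtain ⟨U, hU, -⟩ := glb_pointwise Dom π hcc hclosed hcont hι f hf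
    exact ⟨U, hU⟩
  · intro n
    refine ⟨⟨?_, ?_, ?_⟩, ?_⟩
    · exact fun a b hab => Subtype.coe_le_coe.2 hab n
    · intro p
      obtain ⟨U, hUn, -⟩ := main_construction Dom π hunc hcc hdense hclosed hproj hcont hcomm n p
        (fun _ => Set.univ) (fun _ _ _ _ _ => trivial) trivial
        (fun k x _ => by
          obtain ⟨r, hrD, hrle⟩ := (hproj (n+k) (n+(k+1)) (by omega)).2.1 x
          exact ⟨r, trivial, hrD, hrle⟩)
      exact ⟨U, hUn⟩
    · intro q p hple
      obtain ⟨U, hUn, hW⟩ := main_construction Dom π hunc hcc hdense hclosed hproj hcont hcomm n p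
        (fun k => {x | x ≤ q.1 (n+k)}) (fun _ _ _ hyx hx => le_trans hyx hx) hple
        (fun k x hx => by
          have hq := q.2 (n+k) (n+(k+1)) (by omega)
          obtain ⟨r, hrD, hrle, hrπ⟩ := (hproj (n+k) (n+(k+1)) (by omega)).2.2 (q.1 (n+(k+1)))
            hq.1 x (by rw [hq.2]; exact hx)
          exact ⟨r, hrle, hrD, hrπ⟩)
      refine ⟨U, Subtype.coe_le_coe.1 (fun m => ?_), hUn⟩
      obtain ⟨x, hxR, hxD, hUle⟩ := hW m
      have hq := q.2 m (n+(m+1)) (by omega)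
      calc U.1 m ≤ π m (n+(m+1)) (by omega) x := hUle
        _ ≤ π m (n+(m+1)) (by omega) (q.1 (n+(m+1))) :=
            (hproj m (n+(m+1)) (by omega)).1 x hxD _ hq.1 hxR
        _ = q.1 m := hq.2
    · intro ι _ _ _ hι f hf q hq
      obtain ⟨U, hU, hUc⟩ := glb_pointwise Dom π hcc hclosed hcont hι f hf
      have hqU : q = U := hq.unique hU
      rw [hqU]
      exact hUc n
end

section
/- Suppose κ is a regular cardinal and P, Q are posets such that |P| < κ and Q is κ-distributive. Then forcing with P preserves the κ-distributivity of Q: in the extension by a generic for P × Q, every function from an ordinal α<κ into the ordinals lying in V[G][H] belongs to V[G]. -/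
open Cardinal

/-- A subset of a poset is *dense open* when every condition has an extension in it and
it is closed under extension. -/
def DenseOpen {P : Type} [Preorder P] (D : Set P) : Prop :=
  (∀ p, ∃ q ∈ D, q ≤ p) ∧ ∀ p ∈ D, ∀ q, q ≤ p → q ∈ D

/-- A poset is *κ-distributive* when the intersection of fewer than κ many dense open
subsets is dense (equivalently, forcing with it adds no new sequences of ordinals of
length `< κ`). -/
def KDistributive (κ : Cardinal) (Q : Type) [Preorder Q] : Prop :=
  ∀ (ι : Type), #ι < κ → ∀ D : ι → Set Q, (∀ i, DenseOpen (D i)) →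
    ∀ q : Q, ∃ q' ≤ q, ∀ i, q' ∈ D i

/-- Easton's lemma variant: if `|P| < κ` and `Q` is κ-distributive, then `P` preserves the
κ-distributivity of `Q`.  Combinatorial form of the conclusion (equivalent to: every
function from an ordinal `α < κ` into the ordinals lying in `V[G][H]` belongs to `V[G]`):
for any `< κ` many dense open subsets of `P × Q` and any `q`, there is `q' ≤ q` such that
below `q'`, membership in each dense open set is `P`-dense, uniformly in the `P`-coordinate. -/
theorem stmt7 (κ : Cardinal) (hreg : κ.IsRegular)
    (P Q : Type) [Preorder P] [Preorder Q]
    (hP : #P < κ) (hQ : KDistributive κ Q)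
    (ι : Type) (hι : #ι < κ)
    (D : ι → Set (P × Q)) (hD : ∀ i, DenseOpen (D i)) :
    ∀ q : Q, ∃ q' ≤ q, ∀ i, ∀ p : P, ∃ p' ≤ p, (p', q') ∈ D i := by
  intro q
  set E : ι × P → Set Q := fun ip => {q'' | ∃ p' ≤ ip.2, (p', q'') ∈ D ip.1} with hE
  have hcard : #(ι × P) < κ := by
    rw [Cardinal.mk_prod]
    simp only [Cardinal.lift_id]
    exact Cardinal.mul_lt_of_lt hreg.aleph0_le hι hP
  have hEdo : ∀ ip, DenseOpen (E ip) := by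
    rintro ⟨i, p⟩
    constructor
    · intro q0
      obtain ⟨⟨p', q''⟩, hmem, hle⟩ := (hD i).1 (p, q0)
      exact ⟨q'', ⟨p', hle.1, hmem⟩, hle.2⟩
    · rintro q1 ⟨p', hp', hmem⟩ q2 hq2
      exact ⟨p', hp', (hD i).2 _ hmem _ ⟨le_refl p', hq2⟩⟩
  obtain ⟨q', hq', hall⟩ := hQ (ι × P) hcard E hEdo q
  exact ⟨q', hq', fun i p => hall (i, p)⟩
end

section
/- If κ ≤ λ are infinite cardinals and I is an ideal on κ, then there exists a uniform ideal J on λ such that the quotient Boolean algebras P(κ)/I and P(λ)/J are isomorphic. Moreover, if I is δ-complete and there exists a δ-complete uniform ultrafilter on λ, then J can be taken to be δ-complete. -/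
open Cardinal

/-- An ideal on a set `X`. -/
structure SetIdeal (X : Type) where
  mem : Set X → Prop
  empty_mem : mem ∅
  mono : ∀ s t : Set X, s ⊆ t → mem t → mem s
  union_mem : ∀ s t : Set X, mem s → mem t → mem (s ∪ t)

/-- `δ`-completeness of an ideal. -/
def SetIdeal.Complete {X : Type} (I : SetIdeal X) (δ : Cardinal) : Prop :=
  ∀ (ι : Type) (f : ι → Set X), #ι < δ → (∀ i, I.mem (f i)) → I.mem (⋃ i, f i)

/-- `F` witnesses an isomorphism of the quotient Boolean algebras `P(A)/I ≅ P(B)/J`: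
it induces an order-embedding of the quotients (`[s] ≤ [t]` iff `[F s] ≤ [F t]`)
which is surjective modulo `J`. -/
def QuotIso {A B : Type} (I : SetIdeal A) (J : SetIdeal B) (F : Set A → Set B) : Prop :=
  (∀ s t : Set A, I.mem (s \ t) ↔ J.mem (F s \ F t)) ∧
  ∀ u : Set B, ∃ s : Set A, J.mem (symmDiff (F s) u)

/-!
Identify `λ` with `κ × λ` and fix a uniform ultrafilter `V` on `λ`; let `W α` be the copy of `V`
on the fibre `{α} × λ`. Take for `J` the Fubini-type sum of the `W α` over `I`: a set `u` lies in
`J` iff the set of `α` with `u ∈ W α` lies in `I`. Since each `W α` is an ultrafilter,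
`u ↦ {α | u ∈ W α}` is a Boolean homomorphism `P(λ) → P(κ)`, and it is a left inverse of
`s ↦ s × λ`; this gives `P(κ)/I ≅ P(λ)/J`. A set of size `< λ` belongs to no `W α`, so `J` is
uniform, and `δ`-completeness passes from `I` and `V` to `J`.
-/

open Set Filter

universe u

namespace Ultrafilter

variable {α β ι : Type u}

theorem exists_uniform_of_aleph0_le (hα : ℵ₀ ≤ #α) :
    ∃ V : Ultrafilter α, ∀ s ∈ V, #α ≤ #s := by
  let L : Filter α := comk (fun s => #s < #α) (by simpa using aleph0_pos.trans_le hα)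
    (fun _ ht _ hst => (mk_le_mk_of_subset hst).trans_lt ht)
    (fun _ hs _ ht => (mk_union_le _ _).trans_lt (add_lt_of_lt hα hs ht))
  have : L.NeBot := ⟨fun h => by simpa [L] using (mem_comk.1 (h ▸ mem_bot : ∅ ∈ L))⟩
  refine ⟨Ultrafilter.of L, fun s hs => not_lt.1 fun hsmall => ?_⟩
  exact compl_mem_iff_notMem.1 (of_le L (compl_mem_comk.2 hsmall)) hs

theorem le_mk_of_mem_map {κ : Cardinal} {V : Ultrafilter α} {g : α → β}
    (hg : Function.Injective g) (hV : ∀ s ∈ V, κ ≤ #s) :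
    ∀ s ∈ V.map g, κ ≤ #s :=
  fun s hs => (hV _ (mem_map.1 hs)).trans (mk_preimage_of_injective g s hg)

theorem symmDiff_mem_iff (U : Ultrafilter α) {s t : Set α} :
    symmDiff s t ∈ U ↔ ¬(s ∈ U ↔ t ∈ U) := by
  rw [Set.symmDiff_def, union_mem_iff, sdiff_mem_iff, sdiff_mem_iff]
  tauto

theorem exists_mem_of_iUnion_mem {c : Cardinal} {U : Ultrafilter α}
    [CardinalInterFilter (U : Filter α) c] {s : ι → Set α} (hι : #ι < c) (h : ⋃ i, s i ∈ U) :
    ∃ i, s i ∈ U := by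
  by_contra! hs
  have hcompl : ⋂ i, (s i)ᶜ ∈ U := (cardinal_iInter_mem hι).2 fun i => compl_mem_iff_notMem.2 (hs i)
  rw [← compl_iUnion] at hcompl
  exact compl_mem_iff_notMem.1 hcompl h

instance {c : Cardinal} (V : Ultrafilter α) [CardinalInterFilter (V : Filter α) c] (g : α → β) :
    CardinalInterFilter (V.map g : Filter β) c :=
  inferInstanceAs (CardinalInterFilter (Filter.map g V) c)

end Ultrafilter

namespace SetIdeal

variable {A B : Type} (I : SetIdeal A) (W : A → Ultrafilter B)

def ultrafilterSum : SetIdeal B where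
  mem u := I.mem {a | u ∈ W a}
  empty_mem := by simpa using I.empty_mem
  mono _ _ hst ht := I.mono _ _ (fun _ ha => mem_of_superset ha hst) ht
  union_mem s t hs ht := by
    simpa only [Ultrafilter.union_mem_iff, ofPred_or] using I.union_mem _ _ hs ht

theorem ultrafilterSum_mem_iff {u : Set B} : (I.ultrafilterSum W).mem u ↔ I.mem {a | u ∈ W a} :=
  Iff.rfl

theorem ultrafilterSum_uniform {κ : Cardinal} (hW : ∀ a, ∀ s ∈ W a, κ ≤ #s) (s : Set B)
    (hs : #s < κ) : (I.ultrafilterSum W).mem s := by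
  have hempty : {a | s ∈ W a} = ∅ := eq_empty_of_forall_notMem fun a ha => (hW a s ha).not_gt hs
  rw [ultrafilterSum_mem_iff, hempty]
  exact I.empty_mem

theorem ultrafilterSum_complete {δ : Cardinal} [∀ a, CardinalInterFilter (W a : Filter B) δ]
    (hI : I.Complete δ) : (I.ultrafilterSum W).Complete δ := by
  intro ι f hι hf
  refine I.mono _ _ (fun a ha => ?_) (hI ι (fun i => {a | f i ∈ W a}) hι hf)
  exact mem_iUnion.2 (Ultrafilter.exists_mem_of_iUnion_mem hι ha)

theorem setOf_preimage_mem {p : B → A} (hp : ∀ a, p ⁻¹' {a} ∈ W a) (s : Set A) :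
    {a | p ⁻¹' s ∈ W a} = s := by
  ext a
  refine ⟨fun h => ?_, fun ha => mem_of_superset (hp a) (preimage_mono (singleton_subset_iff.2 ha))⟩
  obtain ⟨b, hbs, rfl⟩ := (W a).nonempty_of_mem (inter_mem h (hp a))
  exact hbs

theorem ultrafilterSum_quotIso {p : B → A} (hp : ∀ a, p ⁻¹' {a} ∈ W a) :
    QuotIso I (I.ultrafilterSum W) (p ⁻¹' ·) := by
  refine ⟨fun s t => ?_, fun u => ⟨{a | u ∈ W a}, ?_⟩⟩
  · rw [ultrafilterSum_mem_iff, ← preimage_sdiff, setOf_preimage_mem W hp]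
  · have hempty : {a | symmDiff (p ⁻¹' {a | u ∈ W a}) u ∈ W a} = ∅ := by
      refine eq_empty_of_forall_notMem fun a ha => (W a).symmDiff_mem_iff.1 ha ?_
      exact Set.ext_iff.1 (setOf_preimage_mem W hp _) a
    rw [ultrafilterSum_mem_iff, hempty]
    exact I.empty_mem

end SetIdeal

/-- If `κ ≤ λ` are infinite cardinals and `I` is an ideal on `κ`, there is a uniform ideal
`J` on `λ` with `P(κ)/I ≅ P(λ)/J`.  Moreover, if `I` is δ-complete and there is a
δ-complete uniform ultrafilter on `λ`, then `J` can be taken δ-complete. -/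
theorem stmt11 (κ lam : Cardinal.{0}) (hκ : ℵ₀ ≤ κ) (hκlam : κ ≤ lam)
    (A B : Type) (hA : #A = κ) (hB : #B = lam)
    (I : SetIdeal A) :
    (∃ J : SetIdeal B, (∀ s : Set B, #↥s < lam → J.mem s) ∧
        ∃ F : Set A → Set B, QuotIso I J F) ∧
    (∀ δ : Cardinal, I.Complete δ →
      (∃ U : Ultrafilter B, (∀ s ∈ U, #↥s = lam) ∧
        ∀ (ι : Type) (f : ι → Set B), #ι < δ → (∀ i, f i ∈ U) → (⋂ i, f i) ∈ U) →
      ∃ J : SetIdeal B, (∀ s : Set B, #↥s < lam → J.mem s) ∧ J.Complete δ ∧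
        ∃ F : Set A → Set B, QuotIso I J F) := by
  have hlam : ℵ₀ ≤ lam := hκ.trans hκlam
  obtain ⟨e⟩ : Nonempty (B ≃ A × B) := Cardinal.eq.1 <| by
    rw [mk_prod, lift_id, lift_id, hA, hB, mul_eq_right hlam hκlam (aleph0_pos.trans_le hκ).ne']
  let W (V : Ultrafilter B) (a : A) : Ultrafilter B := V.map (e.symm ∘ Prod.mk a)
  have hquot (V : Ultrafilter B) : QuotIso I (I.ultrafilterSum (W V)) (Prod.fst ∘ e ⁻¹' ·) :=
    I.ultrafilterSum_quotIso (W V) fun a => Ultrafilter.mem_map.2 (univ_mem' fun b => by simp)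
  have huniform (V : Ultrafilter B) (hV : ∀ s ∈ V, lam ≤ #s) (s : Set B) (hs : #s < lam) :
      (I.ultrafilterSum (W V)).mem s :=
    I.ultrafilterSum_uniform (W V) (fun a =>
      Ultrafilter.le_mk_of_mem_map (e.symm.injective.comp (Prod.mk_right_injective a)) hV) s hs
  refine ⟨?_, fun δ hI ⟨U, hU, hUδ⟩ => ?_⟩
  · obtain ⟨V, hV⟩ := Ultrafilter.exists_uniform_of_aleph0_le (hB ▸ hlam)
    exact ⟨_, huniform V (hB ▸ hV), _, hquot V⟩
  · have : CardinalInterFilter (U : Filter B) δ :=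
      ⟨fun S hS hSU => sInter_eq_iInter ▸ hUδ S _ hS fun s => hSU s s.2⟩
    exact ⟨_, huniform U (fun s hs => (hU s hs).ge), I.ultrafilterSum_complete (W U) hI, _, hquot U⟩
end

section
/- (Keisler) If U is a (μ,κ)-regular ultrafilter on a set X, then the cardinality of the ultrapower (2^{<μ})^X / U is at least 2^κ. -/
/-!
By regularity each `x ∈ X` lies in `A α` for fewer than `μ` indices `α < κ`, so `2^{<μ}` is
large enough to code every subset of `S x = {α | x ∈ A α}`. Sending `s ⊆ κ` to the germ of
`x ↦ code (s ∩ S x)` is injective, because each `α` lies in `S x` for `U`-almost every `x`.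
-/

open Cardinal Set

universe u

theorem Cardinal.nonempty_ord_toType_orderEmbedding {α : Type u} [LinearOrder α]
    [WellFoundedLT α] {μ : Cardinal.{u}} (h : μ ≤ #α) : Nonempty (μ.ord.ToType ↪o α) := by
  have hle : Ordinal.type (α := μ.ord.ToType) (· < ·) ≤ Ordinal.type (α := α) (· < ·) := by
    rwa [Ordinal.type_toType, ord_le, Ordinal.card_type]
  obtain ⟨f⟩ := Ordinal.type_le_iff'.1 hle
  exact ⟨f.orderEmbeddingOfLTEmbedding⟩

theorem mk_setOf_mem_lt_of_iInter_eq_empty {T : Type u} {X : Type*} [LinearOrder T]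
    [WellFoundedLT T] {μ : Cardinal.{u}} {B : T → Set X}
    (hB : ∀ e : μ.ord.ToType ↪o T, ⋂ i, B (e i) = ∅) (x : X) : #{t | x ∈ B t} < μ := by
  by_contra! h
  obtain ⟨e⟩ := nonempty_ord_toType_orderEmbedding h
  exact (hB (e.trans (OrderEmbedding.subtype _))).subset (mem_iInter.2 fun i => (e i).2)

theorem iInter_orderEmbedding_eq_empty {X : Type*} {o p : Ordinal.{u}} {A : Ordinal.{u} → Set X}
    (hA : ∀ g : Ordinal → Ordinal, StrictMonoOn g (Iio o) → (∀ i < o, g i < p) →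
      ⋂ i ∈ Iio o, A (g i) = ∅)
    (e : o.ToType ↪o p.ToType) : ⋂ i, A (e i) = ∅ := by
  let g : Ordinal → Ordinal := fun i => if h : i < o then e (Ordinal.ToType.mk ⟨i, h⟩) else i
  have hg : ∀ i (h : i < o), g i = e (Ordinal.ToType.mk ⟨i, h⟩) := fun i h => dif_pos h
  have hg_mono : StrictMonoOn g (Iio o) := fun i hi j hj hij => by
    rw [hg i hi, hg j hj]
    exact Subtype.coe_lt_coe.2 ((Ordinal.ToType.mk.symm.strictMono.comp e.strictMono).comp
      Ordinal.ToType.mk.strictMono (Subtype.mk_lt_mk.2 hij))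
  have hg_lt : ∀ i < o, g i < p := fun i hi => by
    rw [hg i hi]
    exact (Ordinal.ToType.toOrd _).2
  rw [← subset_empty_iff, ← hA g hg_mono hg_lt]
  intro x hx
  refine mem_iInter₂.2 fun i hi => ?_
  rw [hg i hi]
  exact mem_iInter.1 hx _

theorem two_power_mk_le_mk_germ {T X β : Type u} (U : Ultrafilter X) (B : T → Set X)
    (hBU : ∀ t, B t ∈ U) (hβ : ∀ x, (2 : Cardinal) ^ #{t | x ∈ B t} ≤ #β) :
    (2 : Cardinal) ^ #T ≤ #((U : Filter X).Germ β) := by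
  have emb : ∀ x, Set {t | x ∈ B t} ↪ β := fun x =>
    ((le_def _ _).1 (by rw [mk_set]; exact hβ x)).some
  let code : Set T → (U : Filter X).Germ β := fun s => ↑fun x => emb x (Subtype.val ⁻¹' s)
  have hcode : Function.Injective code := by
    intro s s' hss'
    ext t
    obtain ⟨x, hxss', hxt⟩ := ((Filter.Germ.coe_eq.1 hss').and (hBU t)).exists
    exact Set.ext_iff.1 ((emb x).injective hxss') ⟨t, hxt⟩
  rw [← mk_set]
  exact mk_le_of_injective hcode

/-- Keisler's theorem: if `U` is a `(μ,κ)`-regular ultrafilter on a set `X`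
(there is a κ-indexed family of members of `U` such that every subfamily indexed by a set
of order type `μ` has empty intersection), then the ultrapower `(2^{<μ})^X / U` has
cardinality at least `2^κ`. -/
theorem stmt13 (μ κ : Cardinal.{0}) (X : Type) (U : Ultrafilter X)
    (hreg : ∃ A : Ordinal → Set X,
      (∀ i < κ.ord, A i ∈ U) ∧
      ∀ g : Ordinal → Ordinal, StrictMonoOn g (Set.Iio μ.ord) →
        (∀ i < μ.ord, g i < κ.ord) →
        (⋂ i ∈ Set.Iio μ.ord, A (g i)) = ∅) :
    ∀ β : Type, #β = 2 ^< μ →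
      (2 : Cardinal) ^ κ ≤ #(Filter.Germ (U : Filter X) β) := by
  intro β hβ
  obtain ⟨A, hAU, hAreg⟩ := hreg
  have hsmall := mk_setOf_mem_lt_of_iInter_eq_empty (B := fun t : κ.ord.ToType => A t)
    (iInter_orderEmbedding_eq_empty hAreg)
  calc (2 : Cardinal) ^ κ = 2 ^ #κ.ord.ToType := by rw [mk_ord_toType]
    _ ≤ _ := two_power_mk_le_mk_germ U _ (fun t => hAU _ (Ordinal.ToType.toOrd t).2)
      fun x => hβ ▸ le_powerlt 2 (hsmall x)
end

section
/- Suppose α is a limit point of the class fix(κ,Γ) of ordinals fixed by all Γ-generic embeddings with critical point κ, and cf(α) ∈ fix(κ,Γ). Then α ∈ fix(κ,Γ). -/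
/-!
Pick a strictly increasing sequence `s` of length `δ = cf(α)`, cofinal in `α`, whose terms lie
in `fix(κ,Γ)`. For an embedding `j`, its image `t` is cofinal in `j(α)` with length
`j(δ) = δ`, and `t (j i) = j (s i) = s i < α`. If `α < j(α)`, some `t i` with `i < δ` is `≥ α`;
but `i ≤ j(i) < δ`, so `t i ≤ t (j i) < α`.
-/

open Set

theorem Order.exists_strictMono_range_subset_isCofinal {X : Type*} [LinearOrder X]
    [WellFoundedLT X] {S : Set X} (hS : IsCofinal S) {δ : Ordinal} (hδ : (Order.cof X).ord = δ) :
    ∃ f : Iio δ → X, StrictMono f ∧ range f ⊆ S ∧ IsCofinal (range f) := by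
  subst hδ
  obtain ⟨t, htS, ht, htype⟩ := Ordinal.exists_ord_cof_eq_of_isCofinal hS
  let e : Iio (Order.cof X).ord ≃o t :=
    (OrderIso.setCongr _ _ (congrArg _ htype.symm)).trans
      (.ofRelIsoLT (Ordinal.enum (α := t) (· < ·)))
  refine ⟨fun i ↦ e i, (Subtype.strictMono_coe _).comp e.strictMono, ?_, ?_⟩
  · rintro _ ⟨i, rfl⟩
    exact htS (e i).2
  · rwa [range_comp', e.range_eq, image_univ, Subtype.range_coe]

theorem Ordinal.exists_strictMonoOn_cofinal_seq_mem {α : Ordinal} {S : Set Ordinal}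
    (hS : ∀ β < α, ∃ γ ∈ S, β ≤ γ ∧ γ < α) :
    ∃ s : Ordinal → Ordinal, (∀ i < α.cof.ord, s i ∈ S ∧ s i < α) ∧
      (∀ x < α, ∃ i < α.cof.ord, x ≤ s i) ∧ StrictMonoOn s (Iio α.cof.ord) := by
  have hS' : IsCofinal {x : α.ToType | (ToType.mk.symm x).1 ∈ S} := by
    intro x
    obtain ⟨γ, hγS, hxγ, hγα⟩ := hS _ (mem_Iio.mp (ToType.mk.symm x).2)
    refine ⟨ToType.mk ⟨γ, hγα⟩, by simpa using hγS, ?_⟩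
    rw [← ToType.mk.symm.le_iff_le, OrderIso.symm_apply_apply]
    exact hxγ
  obtain ⟨f, hf_mono, hf_mem, hf_cof⟩ :=
    Order.exists_strictMono_range_subset_isCofinal hS' (by rw [cof_toType])
  let s : Ordinal → Ordinal := fun i ↦
    if h : i < α.cof.ord then (ToType.mk.symm (f ⟨i, h⟩)).1 else 0
  have hs : ∀ i (hi : i < α.cof.ord), s i = (ToType.mk.symm (f ⟨i, hi⟩)).1 :=
    fun i hi ↦ dif_pos hi
  refine ⟨s, fun i hi ↦ ⟨?_, ?_⟩, fun x hx ↦ ?_, fun i hi k hk hik ↦ ?_⟩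
  · rw [hs i hi]
    exact hf_mem ⟨⟨i, hi⟩, rfl⟩
  · rw [hs i hi]
    exact (ToType.mk.symm _).2
  · obtain ⟨_, ⟨i, rfl⟩, hxi⟩ := hf_cof (ToType.mk ⟨x, hx⟩)
    refine ⟨i, i.2, ?_⟩
    rw [hs i i.2]
    rw [← ToType.mk.symm.le_iff_le, OrderIso.symm_apply_apply] at hxi
    exact hxi
  · rw [hs i hi, hs k hk]
    exact ToType.mk.symm.strictMono (hf_mono hik)

theorem Ordinal.apply_eq_self_of_cofinal_image_of_fixed {j : Ordinal → Ordinal}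
    (hj : StrictMono j) {α δ : Ordinal} {s t : Ordinal → Ordinal} (hδ : j δ = δ)
    (hs_fix : ∀ i < δ, j (s i) = s i) (hsα : ∀ i < δ, s i < α)
    (ht_mono : MonotoneOn t (Iio δ)) (ht_eq : ∀ i < δ, t (j i) = j (s i))
    (ht_cof : ∀ x < j α, ∃ i < δ, x ≤ t i) : j α = α := by
  refine hj.le_apply.antisymm' (le_of_not_gt fun hα ↦ ?_)
  obtain ⟨i, hi, hαt⟩ := ht_cof α hα
  have hji : j i < δ := hδ ▸ hj hi
  have : t i ≤ t (j i) := ht_mono hi hji hj.le_apply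
  exact (hsα i hi).not_ge (by rw [← hs_fix i hi, ← ht_eq i hi]; exact hαt.trans this)

/-- `J` is the class of ordinal actions of the `Γ`-generic embeddings with critical point `κ`;
`helem` is what elementarity of `j` yields for a cofinal sequence `s : cf(α) → α`. -/
theorem stmt15 (J : Set (Ordinal → Ordinal))
    (hmono : ∀ j ∈ J, StrictMono j)
    (helem : ∀ j ∈ J, ∀ (α δ : Ordinal) (s : Ordinal → Ordinal),
      δ = (Ordinal.cof α).ord →
      (∀ i < δ, s i < α) → (∀ x < α, ∃ i < δ, x ≤ s i) →
      StrictMonoOn s (Set.Iio δ) →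
      ∃ t : Ordinal → Ordinal,
        MonotoneOn t (Set.Iio (j δ)) ∧
        (∀ i < δ, t (j i) = j (s i)) ∧
        (∀ i < j δ, t i < j α) ∧
        (∀ x < j α, ∃ i < j δ, x ≤ t i))
    (F : Set Ordinal) (hF : F = {lam | ∀ j ∈ J, j lam = lam})
    (α : Ordinal)
    (hlim : ∀ β < α, ∃ γ ∈ F, β < γ ∧ γ < α)
    (hcof : (Ordinal.cof α).ord ∈ F) :
    α ∈ F := by
  obtain ⟨s, hsF, hs_cof, hs_mono⟩ := Ordinal.exists_strictMonoOn_cofinal_seq_mem fun β hβ ↦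
    let ⟨γ, hγF, hβγ, hγα⟩ := hlim β hβ
    ⟨γ, hγF, hβγ.le, hγα⟩
  subst hF
  intro j hj
  have hδ : j α.cof.ord = α.cof.ord := hcof j hj
  obtain ⟨t, ht_mono, ht_eq, -, ht_cof⟩ :=
    helem j hj α _ s rfl (fun i hi ↦ (hsF i hi).2) hs_cof hs_mono
  rw [hδ] at ht_mono ht_cof
  exact Ordinal.apply_eq_self_of_cofinal_image_of_fixed (hmono j hj) hδ
    (fun i hi ↦ (hsF i hi).1 j hj) (fun i hi ↦ (hsF i hi).2) ht_mono ht_eq ht_cof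
end

section
/- If λ is a regular cardinal in FK(κ,Γ) — i.e., λ carries a uniform, κ-complete, precipitous ideal I with P(λ)/I ∈ Γ — then λ is not in fix(κ,Γ). Hence FK(κ,Γ) and fix(κ,Γ) are disjoint. -/
open Cardinal

/-- An ideal on the set of ordinals below `o`, as a collection of null subsets of `Iio o`. -/
structure OrdIdeal (o : Ordinal) where
  mem : Set Ordinal → Prop
  mono : ∀ s t : Set Ordinal, s ⊆ t → mem t → mem s
  union_mem : ∀ s t : Set Ordinal, mem s → mem t → mem (s ∪ t)
  proper : ¬ mem (Set.Iio o)

/-- `δ`-completeness: closure under unions of fewer than `δ` members. -/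
def OrdIdeal.Complete {o : Ordinal} (I : OrdIdeal o) (δ : Cardinal) : Prop :=
  ∀ i : Ordinal, i.card < δ → ∀ g : Ordinal → Set Ordinal,
    (∀ x < i, I.mem (g x)) → I.mem (⋃ x ∈ Set.Iio i, g x)

/-- Uniformity: every subset of `Iio o` of cardinality less than `|o|` is null. -/
def OrdIdeal.Uniform {o : Ordinal} (I : OrdIdeal o) : Prop :=
  ∀ s : Set Ordinal, s ⊆ Set.Iio o → #↥s < Cardinal.lift.{1, 0} o.card → I.mem s

theorem StrictMonoOn.le_apply_of_mem_Iio {β : Type*} [LinearOrder β] [WellFoundedLT β]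
    {o : β} {F : β → β} (hF : StrictMonoOn F (Set.Iio o)) {α : β} (hα : α < o) : α ≤ F α := by
  induction α using WellFoundedLT.induction with
  | ind α ih =>
    by_contra! hlt
    exact (ih (F α) hlt (hlt.trans hα)).not_gt (hF (hlt.trans hα) hα hlt)

def LTModBounded (o : Ordinal) (f g : Ordinal → Ordinal) : Prop :=
  ∃ b < o, ∀ x, b ≤ x → x < o → f x < g x

/-- The images of the constant functions `α < o` form a strictly increasing `o`-sequence below
`ρ id`. -/
theorem le_apply_id_of_ltModBounded {o : Ordinal} (ho : Order.IsSuccLimit o)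
    {ρ : (Ordinal → Ordinal) → Ordinal} (hρ : ∀ f g, LTModBounded o f g → ρ f < ρ g) :
    o ≤ ρ id := by
  set F : Ordinal → Ordinal := fun α => ρ fun _ => α
  have hF : StrictMonoOn F (Set.Iio o) := fun α _ β _ hαβ =>
    hρ _ _ ⟨0, ho.bot_lt, fun _ _ _ => hαβ⟩
  have hF_lt : ∀ α < o, F α < ρ id := fun α hα =>
    hρ _ _ ⟨Order.succ α, ho.succ_lt hα, fun _ hx _ => Order.succ_le_iff.mp hx⟩
  by_contra! hid
  exact (hF.le_apply_of_mem_Iio hid).not_gt (hF_lt _ hid)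

/-- `Γ`-membership of the quotient forcing and precipitousness are abstract predicates,
`GammaEmb` collects the ordinal actions of the generic embeddings with critical point `κ`, and
`hinterface` supplies, for each such ideal, a generic ultrapower `j ∈ GammaEmb` together with
its representation map `ρ = f ↦ [f]`. -/
theorem stmt16 (κ : Cardinal.{0})
    (InGamma : ∀ (Q : Type 1), (Q → Q → Prop) → Prop)
    (Precipitous : ∀ {o : Ordinal}, OrdIdeal o → Prop)
    (GammaEmb : Set (Ordinal → Ordinal))
    (hinterface : ∀ lam : Cardinal.{0}, lam.IsRegular →
      ∀ I : OrdIdeal lam.ord, I.Uniform → I.Complete κ → ¬ I.Complete (Order.succ κ) →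
        Precipitous I →
        InGamma {s : Set Ordinal // s ⊆ Set.Iio lam.ord ∧ ¬ I.mem s}
          (fun s t => I.mem (s.1 \ t.1)) →
        ∃ j ∈ GammaEmb, ∃ ρ : (Ordinal → Ordinal) → Ordinal,
          (∀ f : Ordinal → Ordinal, (∀ x < lam.ord, f x < lam.ord) → ρ f < j lam.ord) ∧
          ∀ f g : Ordinal → Ordinal,
            (∃ b < lam.ord, ∀ x, b ≤ x → x < lam.ord → f x < g x) → ρ f < ρ g) :
    ∀ lam : Cardinal.{0}, lam.IsRegular →
      (∃ I : OrdIdeal lam.ord, I.Uniform ∧ I.Complete κ ∧ ¬ I.Complete (Order.succ κ) ∧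
        Precipitous I ∧
        InGamma {s : Set Ordinal // s ⊆ Set.Iio lam.ord ∧ ¬ I.mem s}
          (fun s t => I.mem (s.1 \ t.1))) →
      lam.ord ∉ {o : Ordinal | ∀ j ∈ GammaEmb, j o = o} := by
  rintro lam hreg ⟨I, hu, hc, hnc, hp, hg⟩ hfix
  obtain ⟨j, hj, ρ, hρ_bound, hρ_mono⟩ := hinterface lam hreg I hu hc hnc hp hg
  have hid_lt : ρ id < lam.ord := hfix j hj ▸ hρ_bound id fun _ hx => hx
  have hle : lam.ord ≤ ρ id :=
    le_apply_id_of_ltModBounded (isSuccLimit_ord hreg.aleph0_le) hρ_mono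
  exact hle.not_gt hid_lt
end

section
/- Suppose that for some uniform ultrafilter U on ω_m, the reduced power |ω_n^{ω_m}/U| = ω_{n+1}, and GCH holds below ℵ_ω. Then the chromatic number of the Erdős–Hajnal graph EH(ω_m, ω_n) equals ω_{n+1}. -/
/-!
Colouring a function by its germ modulo `U` is proper, since `U` is uniform and adjacent functions
agree on fewer than `ℵ_m` points; so the chromatic number is at most `ℵ_{n+1}`. There are at most
`ℵ_n ^ ℵ_m` germs, and under GCH this is `ℵ_n` when `m < n`, so `n ≤ m`.

For the lower bound, well-order `ι` in type `ω_m`; functions agreeing only on a bounded set are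
then adjacent. If `n = m`, coding `x : ι → Bool` by `z ↦ (z, x|_{<z})` gives a clique of size
`2 ^ ℵ_m = ℵ_{m+1}`. If `m = n + K + 1`, the shift graph on increasing `(K+1)`-tuples of `ι` maps
into the graph: the shift graph on all `(K+1)`-tuples of `P^K(ω_n)` has an `ω_n`-colouring `H`
(induction on `K`, separating consecutive sets by points), and a tuple `s` goes to the function
`z ↦ H(s)`, with `s` read through an embedding `Iio z ↪ P^K(ω_n)`. By Erdős–Hajnal, a
`γ`-colouring of the shift graph on increasing `(K+1)`-tuples of `ι` forces `|ι| ≤ |P^K(γ)|`,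
which for `|γ| ≤ ℵ_n` is `ℵ_{n+K} < ℵ_m`.
-/

open Cardinal

noncomputable def ChrNum (V : Type) (Adj : V → V → Prop) : Cardinal :=
  sInf {c : Cardinal | ∃ (γ : Type) (f : V → γ), #γ = c ∧ ∀ x y, Adj x y → f x ≠ f y}

open Set

universe u

theorem Fin.init_cons {α : Type*} {n : ℕ} (a : α) (q : Fin (n + 1) → α) :
    Fin.init (Fin.cons a q : Fin (n + 2) → α) = Fin.cons a (Fin.init q) := by
  funext i
  cases i using Fin.cases <;> simp [Fin.init]

theorem two_power_aleph_natCast_congr_univ {k : ℕ} (h : (2 : Cardinal.{u}) ^ ℵ_ k = ℵ_ (k + 1)) :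
    (2 : Cardinal.{0}) ^ ℵ_ k = ℵ_ (k + 1) := by
  apply lift_injective.{u}
  simpa using congrArg lift.{0} h

theorem exists_linearOrder_mk_Iio_lt (α : Type u) :
    ∃ _ : LinearOrder α, ∀ i : α, #(Iio i) < #α := by
  obtain ⟨r, _, hr⟩ := exists_ord_eq α
  let _ := IsWellOrder.linearOrder r
  exact ⟨inferInstance, fun i => card_typein_lt (r := r) i hr⟩

theorem mk_le_mk_set_iterate (β : Type u) (k : ℕ) : #β ≤ #(Set^[k] β) := by
  induction k with
  | zero => rfl
  | succ k ih => rw [Function.iterate_succ_apply', mk_set]; exact ih.trans (cantor _).le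

theorem mk_set_iterate_le_mk_set_iterate {γ δ : Type u} (h : #γ ≤ #δ) (j : ℕ) :
    #(Set^[j] γ) ≤ #(Set^[j] δ) := by
  induction j with
  | zero => exact h
  | succ j ih =>
    simp only [Function.iterate_succ_apply', mk_set]
    exact power_le_power_left two_ne_zero ih

theorem two_power_le_aleph_of_lt (gch : ∀ k : ℕ, (2 : Cardinal.{u}) ^ ℵ_ k = ℵ_ (k + 1))
    {n : ℕ} {c : Cardinal.{u}} (h : c < ℵ_ n) : 2 ^ c ≤ ℵ_ n := by
  rcases lt_or_ge c ℵ₀ with hc | hc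
  · exact (power_lt_aleph0 (natCast_lt_aleph0 (n := 2)) hc).le.trans (aleph0_le_aleph _)
  · obtain ⟨o, rfl⟩ := mem_range_aleph_iff.2 hc
    obtain ⟨j, rfl⟩ :=
      Ordinal.lt_omega0.1 ((aleph_lt_aleph.1 h).trans (Ordinal.natCast_lt_omega0 n))
    rw [gch j, aleph_le_aleph, ← Order.succ_eq_add_one, Order.succ_le_iff]
    exact aleph_lt_aleph.1 h

theorem mk_set_iterate_of_mk_eq_aleph (gch : ∀ k : ℕ, (2 : Cardinal.{u}) ^ ℵ_ k = ℵ_ (k + 1))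
    {n : ℕ} {β : Type u} (hβ : #β = ℵ_ n) (j : ℕ) :
    #(Set^[j] β) = ℵ_ ↑(n + j) := by
  induction j with
  | zero => exact hβ
  | succ j ih => rw [Function.iterate_succ_apply', mk_set, ih, gch, ← add_assoc, Nat.cast_succ]

theorem aleph_power_aleph_of_lt (gch : ∀ k : ℕ, (2 : Cardinal.{u}) ^ ℵ_ k = ℵ_ (k + 1))
    {m n : ℕ} (h : m < n) : (ℵ_ n : Cardinal.{u}) ^ ℵ_ m = ℵ_ n := by
  obtain ⟨n, rfl⟩ := Nat.exists_eq_add_one_of_ne_zero (Nat.ne_zero_of_lt h)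
  have hle : ℵ_ m ≤ ℵ_ n := aleph_le_aleph.2 (by exact_mod_cast Nat.le_of_lt_succ h)
  rw [Nat.cast_succ, ← gch n, ← power_mul, mul_eq_left (aleph0_le_aleph _) hle (aleph_pos _).ne']

theorem mk_le_mk_set_iterate_of_shift_coloring {ι : Type u} [LinearOrder ι] (j : ℕ)
    {γ : Type u} (c : (Fin (j + 1) → ι) → γ)
    (hc : ∀ u : Fin (j + 2) → ι, StrictMono u → c (Fin.init u) ≠ c (Fin.tail u)) :
    #ι ≤ #(Set^[j] γ) := by
  induction j generalizing γ with
  | zero =>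
    refine mk_le_of_injective (f := fun a => c ![a]) (.of_lt_imp_ne fun a b hab => ?_)
    have hinit : Fin.init ![a, b] = ![a] := by ext i; fin_cases i; rfl
    exact hinit ▸ hc ![a, b] (by simpa using hab)
  | succ j ih =>
    -- colour a tuple by the set of colours of its extensions by one smaller point on the left
    refine ih (fun s => {x | ∃ b, StrictMono (Fin.cons b s : Fin (j + 2) → ι) ∧
      c (Fin.cons b s) = x}) fun u hu heq => ?_
    have hmem : c u ∈ {x | ∃ b, StrictMono (Fin.cons b (Fin.tail u) : Fin (j + 2) → ι) ∧
        c (Fin.cons b (Fin.tail u)) = x} := ⟨u 0, by rw [Fin.cons_self_tail]; exact ⟨hu, rfl⟩⟩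
    obtain ⟨b, hb, hbc⟩ := heq ▸ hmem
    rw [← Fin.init_cons] at hb hbc
    refine hc (Fin.cons b u) ?_ hbc
    rw [Fin.init_cons] at hb
    exact hu.vecCons (strictMono_vecCons.1 hb).1

section ShiftColoring

variable {M N C D : Type*}

-- `H` properly colours the shift graph on all `(k+1)`-tuples, with edges `init v — tail v`.
def IsShiftColoring {k : ℕ} (H : (Fin (k + 1) → M) → C) : Prop :=
  ∀ v : Fin (k + 2) → M, Fin.init v ≠ Fin.tail v → H (Fin.init v) ≠ H (Fin.tail v)

theorem IsShiftColoring.comp {k : ℕ} {H : (Fin (k + 1) → M) → C} (hH : IsShiftColoring H)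
    {e : C → D} (he : e.Injective) : IsShiftColoring (e ∘ H) :=
  fun v hv h => hH v hv (he h)

theorem isShiftColoring_zero {A : M → C} (hA : A.Injective) :
    IsShiftColoring (k := 0) fun s => A (s 0) := by
  intro v hv h
  refine hv (funext fun i => ?_)
  rw [Fin.fin_one_eq_zero i]
  exact hA h

/-- Replace each consecutive pair of a tuple of sets by a point separating them (`none` if they
are equal), and record on which side of the first pair its point lies. -/
theorem IsShiftColoring.succ {k : ℕ} {H : (Fin (k + 1) → Option N) → C}
    (hH : IsShiftColoring H) {A : M → Set N} (hA : A.Injective) :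
    ∃ H' : (Fin (k + 2) → M) → Bool × C, IsShiftColoring H' := by
  classical
  have hsep : ∀ a b, ∃ o : Option N,
      (o = none ↔ a = b) ∧ ∀ x ∈ o, x ∈ symmDiff (A a) (A b) := by
    intro a b
    by_cases hab : a = b
    · exact ⟨none, by simp [hab]⟩
    · obtain ⟨x, hx⟩ := nonempty_iff_ne_empty.2 (symmDiff_eq_bot.not.2 (hA.ne hab))
      exact ⟨some x, by simp [hab], fun y hy => Option.mem_some_iff.1 hy ▸ hx⟩
  choose δ hδnone hδsep using hsep
  let W : ∀ {l : ℕ}, (Fin (l + 1) → M) → Fin l → Option N :=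
    fun s i => δ (s i.castSucc) (s i.succ)
  refine ⟨fun s => (decide (∃ x ∈ W s 0, x ∈ A (s 0)), H (W s)), fun v hv heq => ?_⟩
  have hinit : W (Fin.init v) = Fin.init (W v) := by
    funext i; simp only [W, Fin.init, Fin.succ_castSucc]
  have htail : W (Fin.tail v) = Fin.tail (W v) := by
    funext i; simp only [W, Fin.tail, Fin.succ_castSucc]
  obtain ⟨hbit, hcol⟩ := Prod.ext_iff.1 heq
  by_cases hW : Fin.init (W v) = Fin.tail (W v)
  swap
  · exact hH (W v) hW (by rw [← hinit, ← htail]; exact hcol)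
  have hconst : ∀ i, W v i = W v 0 := by
    intro i
    induction i using Fin.induction with
    | zero => rfl
    | succ i ih => rw [← ih]; exact (congrFun hW i).symm
  cases h0 : W v 0 with
  | none => exact hv (funext fun i => (hδnone _ _).1 ((hconst i).trans h0))
  | some x =>
    have h1 : W v 1 = some x := (hconst 1).trans h0
    have hx : x ∈ symmDiff (A (v 0)) (A (v 1)) := hδsep _ _ x h0
    have hb0 : (∃ y ∈ W (Fin.init v) 0, y ∈ A (Fin.init v 0)) ↔ x ∈ A (v 0) := by
      rw [hinit]; simp [Fin.init, h0]
    have hb1 : (∃ y ∈ W (Fin.tail v) 0, y ∈ A (Fin.tail v 0)) ↔ x ∈ A (v 1) := by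
      rw [htail]; simp [Fin.tail, h1]
    rw [decide_eq_decide, hb0, hb1] at hbit
    rw [mem_symmDiff, hbit] at hx
    tauto

theorem exists_isShiftColoring_of_mk_le_mk_set_iterate {β : Type u} (hβ : ℵ₀ ≤ #β) (k : ℕ)
    {M : Type u} (hM : #M ≤ #(Set^[k] β)) :
    ∃ H : (Fin (k + 1) → M) → β, IsShiftColoring H := by
  induction k generalizing M with
  | zero =>
    obtain ⟨A⟩ := (le_def _ _).1 hM
    exact ⟨_, isShiftColoring_zero A.injective⟩
  | succ k ih =>
    set N := Set^[k] β
    obtain ⟨A⟩ := (le_def M (Set N)).1 (by rwa [← Function.iterate_succ_apply' Set k β])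
    have hN : ℵ₀ ≤ #N := hβ.trans (mk_le_mk_set_iterate β k)
    obtain ⟨H, hH⟩ := ih (M := Option N) (by rw [mk_option, add_one_eq hN])
    obtain ⟨H', hH'⟩ := hH.succ A.injective
    obtain ⟨e⟩ := (le_def (Bool × β) β).1 <| by
      simp only [mk_prod, mk_fintype, Fintype.card_bool, Nat.cast_ofNat, lift_ofNat, lift_uzero]
      exact mul_le_of_le hβ ((natCast_lt_aleph0 (n := 2)).le.trans hβ) le_rfl
    exact ⟨_, hH'.comp e.injective⟩

end ShiftColoring

section BoundedAgreement

variable {ι β : Type u} [LinearOrder ι]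

theorem BddAbove.mk_lt {κ : Cardinal.{u}} (hκ : ℵ₀ ≤ κ) (hseg : ∀ z : ι, #(Iio z) < κ)
    {s : Set ι} (hs : BddAbove s) : #s < κ := by
  obtain ⟨z, hz⟩ := hs
  calc #s ≤ #(Iic z) := mk_le_mk_of_subset hz
    _ = #(insert z (Iio z) : Set ι) := by rw [Iio_insert]
    _ ≤ #(Iio z) + 1 := mk_insert_le
    _ < κ := add_lt_of_lt hκ (hseg z) (one_lt_aleph0.trans_le hκ)

theorem exists_bddAbove_eq_of_isShiftColoring [Nonempty β] {M : Type u}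
    (hseg : ∀ z : ι, #(Iio z) ≤ #M) {k : ℕ} {H : (Fin (k + 1) → M) → β}
    (hH : IsShiftColoring H) :
    ∃ Φ : (Fin (k + 1) → ι) → ι → β, ∀ u : Fin (k + 2) → ι, StrictMono u →
      BddAbove {z | Φ (Fin.init u) z = Φ (Fin.tail u) z} := by
  classical
  have e : ∀ z : ι, Iio z ↪ M := fun z => ((le_def _ _).1 (hseg z)).some
  refine ⟨fun s z => if h : ∀ i, s i < z then H fun i => e z ⟨s i, h i⟩
    else Classical.arbitrary β, fun u hu => ⟨u (Fin.last _), fun z hz => not_lt.1 fun hlast => ?_⟩⟩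
  have hlt : ∀ i, u i < z := fun i => (hu.monotone (Fin.le_last i)).trans_lt hlast
  let V : Fin (k + 2) → M := fun i => e z ⟨u i, hlt i⟩
  have hV : Fin.init V ≠ Fin.tail V := fun h =>
    (hu (Fin.castSucc_lt_succ (i := (0 : Fin (k + 1))))).ne
      (congrArg Subtype.val ((e z).injective (congrFun h 0)))
  refine hH V hV ?_
  have hinit : ∀ i, Fin.init u i < z := fun i => hlt _
  have htail : ∀ i, Fin.tail u i < z := fun i => hlt _
  simp only [mem_ofPred_eq, dif_pos hinit, dif_pos htail] at hz
  exact hz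

theorem exists_bddAbove_eq_of_mk_sigma_le (hβ : #(Σ z : ι, Iio z → Bool) ≤ #β) :
    ∃ F : (ι → Bool) → ι → β, ∀ x y, x ≠ y → BddAbove {z | F x z = F y z} := by
  obtain ⟨e⟩ := (le_def _ _).1 hβ
  refine ⟨fun x z => e ⟨z, fun w => x w⟩, fun x y hxy => ?_⟩
  obtain ⟨z₀, hz₀⟩ := Function.ne_iff.1 hxy
  refine ⟨z₀, fun z hz => not_lt.1 fun hlt => hz₀ ?_⟩
  exact congrFun (eq_of_heq (Sigma.mk.inj_iff.1 (e.injective hz)).2) ⟨z₀, hlt⟩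

end BoundedAgreement

section LowerBound

variable {ι β γ : Type u} [LinearOrder ι]

theorem aleph_add_one_le_of_lt (gch : ∀ k : ℕ, (2 : Cardinal.{u}) ^ ℵ_ k = ℵ_ (k + 1))
    {m n : ℕ} (hnm : n < m) (hseg : ∀ z : ι, #(Iio z) < ℵ_ m) (hι : #ι = ℵ_ m)
    (hβ : #β = ℵ_ n) (c : (ι → β) → γ) (hc : ∀ f g, #{a | f a = g a} < ℵ_ m → c f ≠ c g) :
    ℵ_ (n + 1) ≤ #γ := by
  obtain ⟨K, rfl⟩ := Nat.exists_eq_add_of_lt hnm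
  have hM := mk_set_iterate_of_mk_eq_aleph gch hβ K
  have : Nonempty β := mk_ne_zero_iff.1 (hβ ▸ (aleph_pos _).ne')
  obtain ⟨H, hH⟩ :=
    exists_isShiftColoring_of_mk_le_mk_set_iterate (hβ ▸ aleph0_le_aleph _) K le_rfl
  obtain ⟨Φ, hΦ⟩ := exists_bddAbove_eq_of_isShiftColoring (M := Set^[K] β) (fun z => by
    have := hseg z
    rwa [Nat.cast_succ, ← succ_aleph, Order.lt_succ_iff, ← hM] at this) hH
  have hιK := mk_le_mk_set_iterate_of_shift_coloring K (c ∘ Φ) fun u hu =>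
    hc _ _ ((hΦ u hu).mk_lt (aleph0_le_aleph _) hseg)
  by_contra! hγ
  rw [← succ_aleph, Order.lt_succ_iff, ← hβ] at hγ
  have := (hιK.trans (mk_set_iterate_le_mk_set_iterate hγ K)).trans_eq hM
  rw [hι, aleph_le_aleph, Nat.cast_le] at this
  omega

theorem aleph_add_one_le_of_eq (gch : ∀ k : ℕ, (2 : Cardinal.{u}) ^ ℵ_ k = ℵ_ (k + 1))
    {m : ℕ} (hseg : ∀ z : ι, #(Iio z) < ℵ_ m) (hι : #ι = ℵ_ m)
    (hβ : #β = ℵ_ m) (c : (ι → β) → γ) (hc : ∀ f g, #{a | f a = g a} < ℵ_ m → c f ≠ c g) :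
    ℵ_ (m + 1) ≤ #γ := by
  have hsigma : #(Σ z : ι, Iio z → Bool) ≤ #β := by
    rw [mk_sigma, hβ]
    calc sum (fun z : ι => #(Iio z → Bool)) ≤ sum fun _ : ι => ℵ_ m :=
          sum_le_sum _ _ fun z => by simpa using two_power_le_aleph_of_lt gch (hseg z)
      _ = ℵ_ m := by rw [sum_const', hι, mul_eq_self (aleph0_le_aleph _)]
  obtain ⟨F, hF⟩ := exists_bddAbove_eq_of_mk_sigma_le hsigma
  have hinj : (c ∘ F).Injective := fun x y hxy => by_contra fun hne =>
    hc _ _ ((hF x y hne).mk_lt (aleph0_le_aleph _) hseg) hxy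
  calc ℵ_ (m + 1) = #(ι → Bool) := by simp [hι, gch]
    _ ≤ #γ := mk_le_of_injective hinj

end LowerBound

theorem chrNum_eq_of_forall_le {V γ : Type} {Adj : V → V → Prop} (f : V → γ)
    (hf : ∀ x y, Adj x y → f x ≠ f y)
    (h : ∀ (δ : Type) (g : V → δ), (∀ x y, Adj x y → g x ≠ g y) → #γ ≤ #δ) :
    ChrNum V Adj = #γ :=
  le_antisymm (csInf_le' ⟨γ, f, rfl, hf⟩)
    (le_csInf ⟨_, γ, f, rfl, hf⟩ fun _ ⟨δ, g, hδ, hg⟩ => hδ ▸ h δ g hg)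

theorem Ultrafilter.germ_coe_ne_of_mk_lt {ι β : Type*} {U : Ultrafilter ι} {κ : Cardinal}
    (huniform : ∀ s ∈ U, #s = κ) {f g : ι → β} (h : #{a | f a = g a} < κ) :
    (f : (U : Filter ι).Germ β) ≠ g :=
  fun hfg => h.ne (huniform _ (Filter.Germ.coe_eq.1 hfg))

/-- If some uniform ultrafilter `U` on `ω_m` has reduced power `|ω_n^{ω_m}/U| = ω_{n+1}`,
and GCH holds below `ℵ_ω`, then the chromatic number of the Erdős–Hajnal graph
`EH(ω_m, ω_n)` (vertices: functions `ω_m → ω_n`; edges: almost-everywhere disagreement)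
equals `ω_{n+1}`. -/
theorem stmt17 (n m : ℕ)
    (gch : ∀ k : ℕ, (2 : Cardinal) ^ Cardinal.aleph k = Cardinal.aleph (k + 1))
    (ι β : Type) (hι : #ι = Cardinal.aleph m) (hβ : #β = Cardinal.aleph n)
    (U : Ultrafilter ι) (huniform : ∀ s ∈ U, #↥s = Cardinal.aleph m)
    (hsize : #(Filter.Germ (U : Filter ι) β) = Cardinal.aleph (n + 1)) :
    ChrNum (ι → β) (fun f g => #↥{α : ι | f α = g α} < Cardinal.aleph m) =
      Cardinal.aleph (n + 1) := by
  have gch₀ : ∀ k : ℕ, (2 : Cardinal.{0}) ^ ℵ_ k = ℵ_ (k + 1) :=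
    fun k => two_power_aleph_natCast_congr_univ (gch k)
  obtain ⟨_, hseg⟩ := exists_linearOrder_mk_Iio_lt ι
  rw [hι] at hseg
  rw [← hsize]
  refine chrNum_eq_of_forall_le _ (fun f g => Ultrafilter.germ_coe_ne_of_mk_lt huniform)
    fun γ c hc => hsize ▸ ?_
  have hnm : n ≤ m := by
    by_contra! hmn
    have := hsize.symm.trans_le (mk_quotient_le.trans_eq (power_def β ι).symm)
    rw [hι, hβ, aleph_power_aleph_of_lt gch₀ hmn, ← succ_aleph, Order.succ_le_iff] at this
    exact this.false
  rcases hnm.lt_or_eq with hnm | rfl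
  · exact aleph_add_one_le_of_lt gch₀ hnm hseg hι hβ c hc
  · exact aleph_add_one_le_of_eq gch₀ hseg hι hβ c hc
end

section
/- If k > 0, n ≤ m, GCH holds below ℵ_ω, and the graph transfer relation [ω_{m+k}, ω_m] ↠ [ω_{n+k}, ω_n] holds, then for all r with n ≤ r ≤ m, the relation [ω_{m+k}, ω_m] ↠ [ω_{r+k}, ω_n] also holds. -/
open Cardinal

/-- The graph transfer relation `[c, l] ↠ [c', l']`: every graph with exactly `c` vertices
and chromatic number exactly `l` has an (induced) subgraph with exactly `c'` vertices and
chromatic number exactly `l'`. -/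
def Transfers (c l c' l' : Cardinal) : Prop :=
  ∀ (V : Type) (Adj : V → V → Prop), Symmetric Adj → (∀ x, ¬ Adj x x) →
    #V = c → ChrNum V Adj = l →
    ∃ S : Set V, #↥S = c' ∧ ChrNum ↥S (fun a b => Adj a.1 b.1) = l'

/-!
A graph on `ℵ_{m+k}` vertices with chromatic number `ℵ_m` is properly colored by `ℵ_m` colors,
and since `ℵ_{m+k}` is regular (`k > 0`), the infinite pigeonhole principle yields a color
class, i.e. an independent set, of every size up to `ℵ_{m+k}`. Adjoining one of size
`ℵ_{r+k}` to the witness of `[ω_{m+k}, ω_m] ↠ [ω_{n+k}, ω_n]` yields a subgraph on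
`ℵ_{r+k}` vertices whose chromatic number lies between `ℵ_n` and `ℵ_n + 1 = ℵ_n`.
-/

namespace ChrNum

variable {V : Type} {Adj : V → V → Prop}

theorem le_of_coloring {γ : Type} (f : V → γ) (hf : ∀ x y, Adj x y → f x ≠ f y) :
    ChrNum V Adj ≤ #γ :=
  csInf_le' ⟨γ, f, rfl, hf⟩

theorem exists_coloring (hirr : ∀ x, ¬ Adj x x) :
    ∃ (γ : Type) (f : V → γ), #γ = ChrNum V Adj ∧ ∀ x y, Adj x y → f x ≠ f y :=
  csInf_mem (s := {c : Cardinal | ∃ (γ : Type) (f : V → γ), #γ = c ∧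
    ∀ x y, Adj x y → f x ≠ f y})
    ⟨#V, V, id, rfl, fun x _ hxy hne => hirr x ((congrArg (Adj x) hne).mpr hxy)⟩

theorem le_of_map {W : Type} {Adj' : W → W → Prop} (e : W → V)
    (he : ∀ x y, Adj' x y → Adj (e x) (e y)) (hirr : ∀ x, ¬ Adj x x) :
    ChrNum W Adj' ≤ ChrNum V Adj := by
  obtain ⟨γ, f, hγ, hf⟩ := exists_coloring hirr
  exact hγ ▸ le_of_coloring (f ∘ e) fun x y hxy => hf _ _ (he x y hxy)

theorem union_le_add_one (hirr : ∀ x, ¬ Adj x x) (S T : Set V)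
    (hT : ∀ x ∈ T, ∀ y ∈ T, ¬ Adj x y) :
    ChrNum ↥(S ∪ T) (fun a b => Adj a.1 b.1) ≤ ChrNum ↥S (fun a b => Adj a.1 b.1) + 1 := by
  classical
  obtain ⟨γ, g, hγ, hg⟩ :=
    exists_coloring (V := ↥S) (Adj := fun a b => Adj a.1 b.1) fun x => hirr x.1
  rw [← hγ, ← mk_option]
  refine le_of_coloring (fun v => if hv : v.1 ∈ S then some (g ⟨v.1, hv⟩) else none) ?_
  intro x y hxy
  by_cases hx : x.1 ∈ S <;> by_cases hy : y.1 ∈ S <;> simp only [hx, hy, dif_pos, dif_neg,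
    not_false_eq_true, ne_eq, Option.some_inj, reduceCtorEq]
  · exact hg ⟨x.1, hx⟩ ⟨y.1, hy⟩ hxy
  · exact (hT _ (x.2.resolve_left hx) _ (y.2.resolve_left hy) hxy).elim

theorem exists_independent_of_lt (hirr : ∀ x, ¬ Adj x x) (hreg : (#V).IsRegular)
    (hlt : ChrNum V Adj < #V) {c : Cardinal} (hc : c ≤ #V) :
    ∃ T : Set V, #T = c ∧ ∀ x ∈ T, ∀ y ∈ T, ¬ Adj x y := by
  obtain ⟨γ, f, hγ, hf⟩ := exists_coloring hirr
  obtain ⟨i, hi⟩ := infinite_pigeonhole f hreg.aleph0_le (by rwa [hreg.cof_ord, hγ])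
  obtain ⟨T, hTi, hT⟩ := le_mk_iff_exists_subset.1 (hi ▸ hc)
  exact ⟨T, hT, fun x hx y hy hxy => hf x y hxy ((hTi hx).trans (hTi hy).symm)⟩

end ChrNum

theorem Transfers.of_le_card {c l c' l' c'' : Cardinal} (h : Transfers c l c' l')
    (hc : c.IsRegular) (hl : l < c) (hl' : ℵ₀ ≤ l') (hc'' : ℵ₀ ≤ c'')
    (hc'c'' : c' ≤ c'') (hc''c : c'' ≤ c) :
    Transfers c l c'' l' := by
  intro V Adj hsymm hirr hV hchr
  obtain ⟨S, hS, hSchr⟩ := h V Adj hsymm hirr hV hchr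
  obtain ⟨T, hT, hTind⟩ :=
    ChrNum.exists_independent_of_lt hirr (hV ▸ hc) (hV ▸ hchr ▸ hl) (hV ▸ hc''c)
  refine ⟨S ∪ T, le_antisymm ?_ ?_, le_antisymm ?_ ?_⟩
  · calc #↥(S ∪ T) ≤ #S + #T := mk_union_le S T
      _ = c'' := by rw [hS, hT, add_eq_right hc'' hc'c'']
  · exact hT ▸ mk_le_mk_of_subset Set.subset_union_right
  · calc _ ≤ ChrNum ↥S (fun a b => Adj a.1 b.1) + 1 := ChrNum.union_le_add_one hirr S T hTind
      _ = l' := by rw [hSchr, add_one_eq hl']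
  · exact hSchr ▸ ChrNum.le_of_map (Set.inclusion Set.subset_union_left) (fun _ _ h => h)
      fun x => hirr x.1

theorem isRegular_aleph_natCast_add {m k : ℕ} (hk : 0 < k) :
    (ℵ_ ((m : Ordinal) + k)).IsRegular := by
  obtain ⟨j, rfl⟩ := Nat.exists_eq_add_of_lt hk
  simpa [← add_assoc] using isRegular_aleph_add_one ((m + j : ℕ) : Ordinal)

theorem stmt18_general (n m k : ℕ) (hk : 0 < k)
    (h : Transfers (Cardinal.aleph (m + k)) (Cardinal.aleph m)
      (Cardinal.aleph (n + k)) (Cardinal.aleph n)) :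
    ∀ r : ℕ, n ≤ r → r ≤ m →
      Transfers (Cardinal.aleph (m + k)) (Cardinal.aleph m)
        (Cardinal.aleph (r + k)) (Cardinal.aleph n) := by
  intro r hnr hrm
  refine h.of_le_card (isRegular_aleph_natCast_add hk) ?_ (aleph0_le_aleph _)
    (aleph0_le_aleph _) ?_ ?_ <;>
    simp only [aleph_lt_aleph, aleph_le_aleph] <;> norm_cast <;> omega

/-- If `k > 0`, `n ≤ m`, GCH holds below `ℵ_ω`, and `[ω_{m+k}, ω_m] ↠ [ω_{n+k}, ω_n]`,
then `[ω_{m+k}, ω_m] ↠ [ω_{r+k}, ω_n]` for all `r` with `n ≤ r ≤ m`. -/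
theorem stmt18 (n m k : ℕ) (hk : 0 < k) (hnm : n ≤ m)
    (gch : ∀ j : ℕ, (2 : Cardinal) ^ Cardinal.aleph j = Cardinal.aleph (j + 1))
    (h : Transfers (Cardinal.aleph (m + k)) (Cardinal.aleph m)
      (Cardinal.aleph (n + k)) (Cardinal.aleph n)) :
    ∀ r : ℕ, n ≤ r → r ≤ m →
      Transfers (Cardinal.aleph (m + k)) (Cardinal.aleph m)
        (Cardinal.aleph (r + k)) (Cardinal.aleph n) :=
  stmt18_general n m k hk h
end
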